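/- arXiv:1907.04416 — 6 statements merged into one kernel-verified Lean document; each statement's English description precedes it below -/
import Mathlib

section
/- For every integer ℓ ≥ 3, every Steiner triple system of order v with v ≥ ℓ^6/16 has an ℓ-good sequencing. -/
/-- A Steiner triple system of order `v` on the point set `{1, …, v}`:
`B` is a set of 3-element blocks, each a subset of `{1, …, v}`, such that every pair of
distinct points of `{1, …, v}` lies in exactly one block. -/
def IsSTS (v : ℕ) (B : Finset (Finset ℕ)) : Prop :=
  (∀ b ∈ B, b ⊆ Finset.Icc 1 v ∧ b.card = 3) ∧
  ∀ p ∈ Finset.Icc 1 v, ∀ q ∈ Finset.Icc 1 v, p ≠ q →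
    ∃! b, b ∈ B ∧ p ∈ b ∧ q ∈ b

/-- `x` lists the points of `{1, …, v}` at positions `1, …, v` (a permutation of the points),
and no `ℓ` consecutive points `x i, x (i+1), …, x (i+ℓ-1)` of the sequencing contain a
block of `B`. -/
def IsGoodSeq (v ℓ : ℕ) (B : Finset (Finset ℕ)) (x : ℕ → ℕ) : Prop :=
  Set.BijOn x (Set.Icc 1 v) (Set.Icc 1 v) ∧
  ∀ i : ℕ, 1 ≤ i → ∀ b ∈ B,
    ¬ (↑b : Set ℕ) ⊆ x '' (Set.Icc i (i + ℓ - 1) ∩ Set.Icc 1 v)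


/-!
Reserve `r` positions, pairwise at least `ℓ` apart, so that every window of `ℓ` consecutive
positions contains at most one of them. Fill the other positions greedily from left to right.
Call a reserved position `p` blocked for an unplaced point `y` if two placed points near `p`
form a block with `y`; at most `b = (2ℓ-3)(ℓ-2)` pairs of positions are near `p`, so `p` is
blocked for at most `b` points. The greedy step picks a point that completes no block with two
recent points and keeps every unplaced point blocked at no more than `r - b` reserved positions.
A new point blocks at most two more reserved positions for each unplaced point, and by double
counting few unplaced points are close to the limit `r - b`, so only few candidates are excluded.
Finally the `r` leftover points are matched to the reserved positions by Hall's theorem: each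
position is admissible for all but `b` of them, each of them for at least `b` positions. The
choice `r = ⌊ℓ⁵/16⌋` of reserved positions `ℓ, 2ℓ, …, rℓ` fits into `v ≥ ℓ⁶/16` positions.
-/

open Finset

lemma Finset.exists_lt_lt_eq_of_card_eq_three {T : Finset ℕ} (hT : #T = 3) :
    ∃ a c e, a < c ∧ c < e ∧ T = {a, c, e} := by
  set g := T.orderEmbOfFin hT
  refine ⟨g 0, g 1, g 2, g.strictMono (by decide), g.strictMono (by decide), ?_⟩
  ext x
  rw [← mem_coe, ← range_orderEmbOfFin T hT, Set.mem_range]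
  simp only [Fin.exists_fin_succ, mem_insert, mem_singleton]
  simp [eq_comm, g]

lemma Finset.ne_of_card_eq_three {α : Type*} [DecidableEq α] {u w y : α}
    (h : #({u, w, y} : Finset α) = 3) : u ≠ w ∧ u ≠ y ∧ w ≠ y := by
  refine ⟨?_, ?_, ?_⟩ <;> rintro rfl
  · rw [insert_eq_of_mem (mem_insert_self _ _)] at h
    have := card_le_two (a := u) (b := y); omega
  · rw [pair_comm, insert_eq_of_mem (mem_insert_self _ _)] at h
    have := card_le_two (a := u) (b := w); omega
  · rw [insert_eq_of_mem (mem_singleton_self _)] at h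
    have := card_le_two (a := u) (b := w); omega

lemma mul_add_le_of_sq_add_mul_lt {ℓ b r c : ℕ} (hr : (ℓ - 1) ^ 2 + ℓ * b < r)
    (hc : c * (r - b - 1) ≤ r * b) : (ℓ - 1) * (ℓ - 1 + c) ≤ r := by
  obtain _ | k := ℓ
  · simp
  have hbr : b + 1 ≤ r := by nlinarith
  obtain ⟨d, rfl⟩ : ∃ d, r = d + b + 1 := ⟨r - b - 1, by omega⟩
  rw [show d + b + 1 - b - 1 = d by omega] at hc
  rw [Nat.add_sub_cancel] at hr ⊢
  have hd : k ^ 2 + k * b ≤ d := by nlinarith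
  rcases d.eq_zero_or_pos with rfl | hd0
  · obtain rfl : k = 0 := by nlinarith
    simp
  refine Nat.le_of_mul_le_mul_right ?_ hd0
  calc k * (k + c) * d = k ^ 2 * d + k * (c * d) := by ring
    _ ≤ k ^ 2 * d + k * ((d + b + 1) * b) := by gcongr
    _ = (k ^ 2 + k * b) * d + k * b * (b + 1) := by ring
    _ ≤ d * d + d * (b + 1) := by gcongr; nlinarith
    _ = (d + b + 1) * d := by ring

lemma isGoodSeq_of_forall_lt {v ℓ : ℕ} {B : Finset (Finset ℕ)} {x : ℕ → ℕ}
    (hB : ∀ b ∈ B, #b = 3) (hmaps : Set.MapsTo x (Set.Icc 1 v) (Set.Icc 1 v))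
    (hinj : Set.InjOn x (Set.Icc 1 v))
    (h : ∀ a c e, 1 ≤ a → a < c → c < e → e < a + ℓ → e ≤ v → {x a, x c, x e} ∉ B) :
    IsGoodSeq v ℓ B x := by
  refine ⟨((Set.finite_Icc 1 v).injOn_iff_bijOn_of_mapsTo hmaps).mp hinj, ?_⟩
  intro i _ b hb hsub
  set Q : Finset ℕ := {n ∈ Icc i (i + ℓ - 1) ∩ Icc 1 v | x n ∈ b}
  have hQv : ∀ n ∈ Q, 1 ≤ n ∧ n ≤ v := fun n hn => by simp_all [Q]
  have hQwin : ∀ n ∈ Q, i ≤ n ∧ n ≤ i + ℓ - 1 := fun n hn => by simp_all [Q]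
  have hQ : Q.image x = b := by
    refine Subset.antisymm (fun u hu => ?_) (fun u hu => ?_)
    · obtain ⟨n, hn, rfl⟩ := mem_image.1 hu
      exact (mem_filter.1 hn).2
    · obtain ⟨n, hn, rfl⟩ := hsub hu
      exact mem_image_of_mem x (by simp_all [Q])
  have hQ3 : #Q = 3 := by
    rw [← hB b hb, ← hQ, card_image_of_injOn (hinj.mono fun n hn => hQv n hn)]
  obtain ⟨a, c, e, hac, hce, hQace⟩ := exists_lt_lt_eq_of_card_eq_three hQ3
  have ha := hQwin a (by simp [hQace])
  have he := hQwin e (by simp [hQace])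
  refine h a c e (hQv a (by simp [hQace])).1 hac hce (by omega) (hQv e (by simp [hQace])).2 ?_
  rwa [← hQ, hQace, image_insert, image_insert, image_singleton] at hb

-- The sum runs over the one block through `u ≠ w` and over its one remaining point.
def third (B : Finset (Finset ℕ)) (u w : ℕ) : ℕ :=
  ∑ b ∈ B with u ∈ b ∧ w ∈ b, ∑ y ∈ b \ {u, w}, y

lemma IsSTS.third_eq {v : ℕ} {B : Finset (Finset ℕ)} (hB : IsSTS v B) {u w y : ℕ}
    (h : {u, w, y} ∈ B) : third B u w = y := by
  obtain ⟨huw, huy, hwy⟩ := ne_of_card_eq_three (hB.1 _ h).2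
  have hsub := (hB.1 _ h).1
  obtain ⟨b, -, hb⟩ := hB.2 u (hsub (by simp)) w (hsub (by simp)) huw
  rw [third, sum_eq_single_of_mem {u, w, y} (by simp [h]) ?_]
  · rw [show ({u, w, y} : Finset ℕ) \ {u, w} = {y} by
      ext; simp only [mem_sdiff, mem_insert, mem_singleton]; grind, sum_singleton]
  · intro b' hb' hne
    rw [mem_filter] at hb'
    exact absurd ((hb _ hb').trans (hb _ ⟨h, by simp, by simp⟩).symm) hne

section Construction

variable {v ℓ n r : ℕ} {B : Finset (Finset ℕ)} {S N : Finset ℕ} {f : ℕ → ℕ} {p z : ℕ}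

-- `(s, t)` is near `p` when `{s, t, p}` has diameter less than `ℓ`.
def nearPairs (ℓ : ℕ) (N : Finset ℕ) (p : ℕ) : Finset (ℕ × ℕ) :=
  {st ∈ N ×ˢ N | st.1 < st.2 ∧ st.2 < st.1 + ℓ ∧ st.2 < p + ℓ ∧ p < st.1 + ℓ}

lemma card_nearPairs_le (hp : p ∉ N) : #(nearPairs ℓ N p) ≤ (2 * ℓ - 3) * (ℓ - 2) := by
  set firsts := (Ico (p + 1 - ℓ) (p + ℓ - 1)).erase p
  have hfst : ∀ st ∈ nearPairs ℓ N p, st.1 ∈ firsts := by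
    intro st hst
    simp only [nearPairs, mem_filter, mem_product] at hst
    simp only [firsts, mem_erase, mem_Ico]
    exact ⟨fun h => hp (h ▸ hst.1.1), by omega, by omega⟩
  have hfibre : ∀ s ∈ firsts, #{st ∈ nearPairs ℓ N p | st.1 = s} ≤ ℓ - 2 := by
    intro s hs
    simp only [firsts, mem_erase, mem_Ico] at hs
    set seconds := if s < p then (Ioo s (s + ℓ)).erase p else Ioo s (p + ℓ)
    calc #{st ∈ nearPairs ℓ N p | st.1 = s} ≤ #seconds := by
          refine card_le_card_of_injOn Prod.snd (fun st hst => ?_) (fun st hst st' hst' h => ?_)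
          · simp only [coe_filter, nearPairs, mem_filter, mem_product, Set.mem_ofPred_eq] at hst
            simp only [seconds, mem_coe]
            split_ifs
            · simp only [mem_erase, mem_Ioo]
              exact ⟨by rintro rfl; exact hp hst.1.1.2, by omega, by omega⟩
            · simp only [mem_Ioo]
              omega
          · simp only [coe_filter, Set.mem_ofPred_eq] at hst hst'
            exact Prod.ext (hst.2.trans hst'.2.symm) h
      _ ≤ ℓ - 2 := by
          simp only [seconds]
          split_ifs
          · rw [card_erase_of_mem (by simp only [mem_Ioo]; omega), Nat.card_Ioo]; omega
          · rw [Nat.card_Ioo]; omega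
  calc #(nearPairs ℓ N p) ≤ (ℓ - 2) * #firsts := card_le_mul_card_image_of_maps_to hfst _ hfibre
    _ ≤ (ℓ - 2) * (2 * ℓ - 3) := by
        gcongr
        rw [card_erase_eq_ite, Nat.card_Ico]
        split_ifs with h <;> simp only [mem_Ico] at h <;> omega
    _ = (2 * ℓ - 3) * (ℓ - 2) := mul_comm _ _

def blockedSlots (B : Finset (Finset ℕ)) (ℓ : ℕ) (S N : Finset ℕ) (f : ℕ → ℕ) (y : ℕ) :
    Finset ℕ :=
  {p ∈ S | ∃ st ∈ nearPairs ℓ N p, {f st.1, f st.2, y} ∈ B}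

lemma IsSTS.card_filter_mem_blockedSlots_le (hB : IsSTS v B) (hp : p ∉ N) (Y : Finset ℕ) :
    #{y ∈ Y | p ∈ blockedSlots B ℓ S N f y} ≤ (2 * ℓ - 3) * (ℓ - 2) :=
  calc #{y ∈ Y | p ∈ blockedSlots B ℓ S N f y}
      ≤ #((nearPairs ℓ N p).image fun st => third B (f st.1) (f st.2)) := by
        refine card_le_card fun y hy => ?_
        simp only [blockedSlots, mem_filter] at hy
        obtain ⟨st, hst, hmem⟩ := hy.2.2
        exact mem_image.2 ⟨st, hst, hB.third_eq hmem⟩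
    _ ≤ #(nearPairs ℓ N p) := card_image_le
    _ ≤ (2 * ℓ - 3) * (ℓ - 2) := card_nearPairs_le hp

lemma IsSTS.card_mul_le_of_le_card_blockedSlots (hB : IsSTS v B) (hSN : Disjoint S N)
    {Y : Finset ℕ} {m : ℕ} (hY : ∀ y ∈ Y, m ≤ #(blockedSlots B ℓ S N f y)) :
    #Y * m ≤ #S * ((2 * ℓ - 3) * (ℓ - 2)) := by
  have := card_nsmul_le_card_nsmul (R := ℕ) (fun y p => p ∈ blockedSlots B ℓ S N f y)
    (s := Y) (t := S) (m := m) (n := (2 * ℓ - 3) * (ℓ - 2)) (fun y hy => ?_) (fun p hp => ?_)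
  · simpa only [smul_eq_mul] using this
  · refine (hY y hy).trans (card_le_card fun p hp => ?_)
    simp only [mem_bipartiteAbove]
    exact ⟨(mem_filter.1 hp).1, hp⟩
  · exact hB.card_filter_mem_blockedSlots_le (disjoint_left.1 hSN hp) Y

lemma card_filter_near_le_two (hgap : ∀ p ∈ S, ∀ p' ∈ S, p < p' → p + ℓ ≤ p') (n : ℕ) :
    #{p ∈ S | n < p + ℓ ∧ p + 1 < n + ℓ} ≤ 2 := by
  by_contra! h
  obtain ⟨T, hT, hT3⟩ :=
    exists_subset_card_eq (show 3 ≤ #{p ∈ S | n < p + ℓ ∧ p + 1 < n + ℓ} by omega)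
  obtain ⟨a, c, e, hac, hce, rfl⟩ := exists_lt_lt_eq_of_card_eq_three hT3
  have ha := mem_filter.1 (hT (by simp : a ∈ ({a, c, e} : Finset ℕ)))
  have hc := mem_filter.1 (hT (by simp : c ∈ ({a, c, e} : Finset ℕ)))
  have he := mem_filter.1 (hT (by simp : e ∈ ({a, c, e} : Finset ℕ)))
  have := hgap a ha.1 c hc.1 hac
  have := hgap c hc.1 e he.1 hce
  omega

structure IsPartialSeq (v ℓ : ℕ) (B : Finset (Finset ℕ)) (S N : Finset ℕ) (f : ℕ → ℕ) :
    Prop where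
  mapsTo : ∀ a ∈ N, f a ∈ Icc 1 v
  injOn : Set.InjOn f N
  triple_not_mem : ∀ a ∈ N, ∀ c ∈ N, ∀ e ∈ N, a < c → c < e → e < a + ℓ → {f a, f c, f e} ∉ B
  card_blockedSlots_add_le : ∀ y ∈ Icc 1 v \ N.image f,
    #(blockedSlots B ℓ S N f y) + (2 * ℓ - 3) * (ℓ - 2) ≤ #S

lemma IsPartialSeq.card_sdiff_image (hf : IsPartialSeq v ℓ B S N f) :
    #(Icc 1 v \ N.image f) = v - #N := by
  rw [card_sdiff_of_subset (fun y hy => ?_), card_image_of_injOn hf.injOn, Nat.card_Icc,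
    Nat.add_sub_cancel]
  obtain ⟨a, ha, rfl⟩ := mem_image.1 hy
  exact hf.mapsTo a ha

lemma isPartialSeq_empty (h : (2 * ℓ - 3) * (ℓ - 2) ≤ #S) : IsPartialSeq v ℓ B S ∅ f :=
  ⟨by simp, by simp, by simp, fun _ _ => by simpa [blockedSlots, nearPairs] using h⟩

lemma blockedSlots_insert_subset (hN : ∀ a ∈ N, a < n) (y : ℕ) :
    blockedSlots B ℓ S (insert n N) (Function.update f n z) y ⊆
      blockedSlots B ℓ S N f y ∪
        {p ∈ S | (n < p + ℓ ∧ p + 1 < n + ℓ) ∧ ∃ a ∈ N, n < a + ℓ ∧ {f a, z, y} ∈ B} := by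
  intro p hp
  rw [blockedSlots, mem_filter] at hp
  simp only [nearPairs, mem_filter, mem_product, mem_insert] at hp
  obtain ⟨hpS, ⟨s, t⟩, ⟨⟨hs, ht⟩, hst, hts, htp, hps⟩, hmem⟩ := hp
  have hsN : s ∈ N := hs.resolve_left fun hsn => by
    rcases ht with htn | ht
    · omega
    · have := hN t ht; omega
  rw [Function.update_of_ne (hN s hsN).ne] at hmem
  rcases ht with rfl | ht
  · rw [Function.update_self] at hmem
    exact mem_union_right _ (mem_filter.2 ⟨hpS, ⟨by omega, by omega⟩, s, hsN, by omega, hmem⟩)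
  · rw [Function.update_of_ne (hN t ht).ne] at hmem
    exact mem_union_left _
      (mem_filter.2 ⟨hpS, (s, t), mem_filter.2 ⟨mem_product.2 ⟨hsN, ht⟩, hst, hts, htp, hps⟩, hmem⟩)

lemma card_blockedSlots_insert_le (hgap : ∀ p ∈ S, ∀ p' ∈ S, p < p' → p + ℓ ≤ p')
    (hN : ∀ a ∈ N, a < n) (y : ℕ) :
    #(blockedSlots B ℓ S (insert n N) (Function.update f n z) y) ≤
      #(blockedSlots B ℓ S N f y) + if ∃ a ∈ N, n < a + ℓ ∧ {f a, z, y} ∈ B then 2 else 0 := by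
  refine (card_le_card (blockedSlots_insert_subset hN y)).trans
    ((card_union_le _ _).trans (Nat.add_le_add_left ?_ _))
  split_ifs with h
  · refine (card_le_card fun p hp => ?_).trans (card_filter_near_le_two hgap n)
    rw [mem_filter] at hp ⊢
    exact ⟨hp.1, hp.2.1⟩
  · rw [filter_false_of_mem fun p _ hp => h hp.2, card_empty]

lemma IsPartialSeq.insert_update (hf : IsPartialSeq v ℓ B S N f)
    (hgap : ∀ p ∈ S, ∀ p' ∈ S, p < p' → p + ℓ ≤ p') (hN : ∀ a ∈ N, a < n)
    (hz : z ∈ Icc 1 v \ N.image f)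
    (hfresh : ∀ a ∈ N, ∀ c ∈ N, n < a + ℓ → n < c + ℓ → {f a, f c, z} ∉ B)
    (hroom : ∀ y ∈ Icc 1 v \ N.image f, ∀ a ∈ N, n < a + ℓ → {f a, z, y} ∈ B →
      #(blockedSlots B ℓ S N f y) + (2 * ℓ - 3) * (ℓ - 2) + 2 ≤ #S) :
    IsPartialSeq v ℓ B S (insert n N) (Function.update f n z) := by
  have heq : Set.EqOn (Function.update f n z) f N :=
    fun a ha => Function.update_of_ne (hN a ha).ne _ _
  have hlt : ∀ m ∈ insert n N, ∀ m' ∈ insert n N, m < m' → m ∈ N := by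
    intro m hm m' hm' hmm'
    rcases mem_insert.1 hm with rfl | hm
    · rcases mem_insert.1 hm' with rfl | hm'
      · omega
      · exact absurd (hN m' hm') (by omega)
    · exact hm
  rw [mem_sdiff, mem_image] at hz
  refine ⟨fun a ha => ?_, ?_, fun a ha c hc e he hac hce hea => ?_, fun y hy => ?_⟩
  · rcases mem_insert.1 ha with rfl | ha
    · simpa using hz.1
    · rw [heq ha]; exact hf.mapsTo a ha
  · rw [coe_insert, Set.injOn_insert fun h => (hN n h).false, Function.update_self,
      heq.image_eq]
    exact ⟨hf.injOn.congr heq.symm, fun ⟨a, ha, hfa⟩ => hz.2 ⟨a, ha, hfa⟩⟩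
  · have haN := hlt a ha c hc hac
    have hcN := hlt c hc e he hce
    rw [heq haN, heq hcN]
    rcases mem_insert.1 he with rfl | he
    · rw [Function.update_self]; exact hfresh a haN c hcN (by omega) (by omega)
    · rw [heq he]; exact hf.triple_not_mem a haN c hcN e he hac hce hea
  · rw [image_insert, Function.update_self, ← image_congr heq.symm, sdiff_insert,
      mem_erase] at hy
    have := card_blockedSlots_insert_le (B := B) (f := f) (z := z) hgap hN y
    split_ifs at this with hnew
    · obtain ⟨a, ha, han, hmem⟩ := hnew
      have := hroom y hy.2 a ha han hmem
      omega
    · have := hf.card_blockedSlots_add_le y hy.2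
      omega

lemma card_filter_lt_add_le (hN : ∀ a ∈ N, a < n) : #{a ∈ N | n < a + ℓ} ≤ ℓ - 1 :=
  calc #{a ∈ N | n < a + ℓ} ≤ #(Ico (n + 1 - ℓ) n) := card_le_card fun a ha => by
        rw [mem_filter] at ha
        have := hN a ha.1
        rw [mem_Ico]; omega
    _ ≤ ℓ - 1 := by rw [Nat.card_Ico]; omega

lemma IsSTS.exists_safe_point (hB : IsSTS v B) (hN : ∀ a ∈ N, a < n) (hSN : Disjoint S N)
    (hr : (ℓ - 1) ^ 2 + ℓ * ((2 * ℓ - 3) * (ℓ - 2)) < #S)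
    (hcard : #S < #(Icc 1 v \ N.image f)) :
    ∃ z ∈ Icc 1 v \ N.image f,
      (∀ a ∈ N, ∀ c ∈ N, n < a + ℓ → n < c + ℓ → {f a, f c, z} ∉ B) ∧
      ∀ y ∈ Icc 1 v \ N.image f, ∀ a ∈ N, n < a + ℓ → {f a, z, y} ∈ B →
        #(blockedSlots B ℓ S N f y) + (2 * ℓ - 3) * (ℓ - 2) + 2 ≤ #S := by
  set b := (2 * ℓ - 3) * (ℓ - 2)
  set U := Icc 1 v \ N.image f
  set W := {a ∈ N | n < a + ℓ}
  set C := {y ∈ U | #S < #(blockedSlots B ℓ S N f y) + b + 2}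
  set F := (W ×ˢ (W.image f ∪ C)).image fun aw => third B (f aw.1) aw.2
  have hW : #W ≤ ℓ - 1 := card_filter_lt_add_le hN
  have hC : #C * (#S - b - 1) ≤ #S * b :=
    hB.card_mul_le_of_le_card_blockedSlots (f := f) hSN fun y hy => by rw [mem_filter] at hy; omega
  have hF : #F ≤ #S :=
    calc #F ≤ #W * (#W + #C) := by
          refine card_image_le.trans ?_
          rw [card_product]
          gcongr
          exact (card_union_le _ _).trans (Nat.add_le_add_right card_image_le _)
      _ ≤ (ℓ - 1) * (ℓ - 1 + #C) := by gcongr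
      _ ≤ #S := mul_add_le_of_sq_add_mul_lt hr hC
  obtain ⟨z, hz⟩ : (U \ F).Nonempty := by
    rw [← card_pos]
    have := le_card_sdiff F U
    omega
  rw [mem_sdiff] at hz
  refine ⟨z, hz.1, fun a ha c hc han hcn hmem => hz.2 ?_, fun y hy a ha han hmem => ?_⟩
  · refine mem_image.2 ⟨(a, f c), ?_, hB.third_eq hmem⟩
    simp only [W, mem_product, mem_union, mem_image, mem_filter]
    exact ⟨⟨ha, han⟩, Or.inl ⟨c, ⟨hc, hcn⟩, rfl⟩⟩
  · by_contra! hy'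
    refine hz.2 (mem_image.2 ⟨(a, y), ?_, hB.third_eq (by rwa [pair_comm])⟩)
    simp only [W, C, mem_product, mem_union, mem_filter]
    exact ⟨⟨ha, han⟩, Or.inr ⟨hy, by omega⟩⟩

lemma IsSTS.exists_isPartialSeq_succ (hB : IsSTS v B) (hS : S ⊆ Icc 1 v)
    (hgap : ∀ p ∈ S, ∀ p' ∈ S, p < p' → p + ℓ ≤ p')
    (hr : (ℓ - 1) ^ 2 + ℓ * ((2 * ℓ - 3) * (ℓ - 2)) < #S) {q : ℕ} (hq : q + 1 ≤ v)
    (hf : IsPartialSeq v ℓ B S (Icc 1 q \ S) f) :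
    ∃ f', IsPartialSeq v ℓ B S (Icc 1 (q + 1) \ S) f' := by
  have hIcc : Icc 1 (q + 1) = insert (q + 1) (Icc 1 q) :=
    (insert_Icc_right_eq_Icc_add_one (by omega)).symm
  by_cases hqS : q + 1 ∈ S
  · exact ⟨f, by rwa [hIcc, insert_sdiff_of_mem _ hqS]⟩
  have hN : ∀ a ∈ Icc 1 q \ S, a < q + 1 := fun a ha => by
    rw [mem_sdiff, mem_Icc] at ha; omega
  have hcard : #S < #(Icc 1 v \ (Icc 1 q \ S).image f) := by
    have hlt : #(Icc 1 q \ S) < #(Icc 1 v \ S) := by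
      refine card_lt_card ⟨sdiff_subset_sdiff (Icc_subset_Icc_right (by omega)) le_rfl,
        fun h => ?_⟩
      have := h (mem_sdiff.2 ⟨mem_Icc.2 ⟨by omega, hq⟩, hqS⟩)
      rw [mem_sdiff, mem_Icc] at this
      omega
    rw [hf.card_sdiff_image]
    rw [card_sdiff_of_subset hS, Nat.card_Icc] at hlt
    omega
  obtain ⟨z, hz, hfresh, hroom⟩ := hB.exists_safe_point hN disjoint_sdiff hr hcard
  refine ⟨Function.update f (q + 1) z, ?_⟩
  rw [hIcc, insert_sdiff_of_notMem _ hqS]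
  exact hf.insert_update hgap hN hz hfresh hroom

lemma IsSTS.exists_isPartialSeq (hB : IsSTS v B) (hS : S ⊆ Icc 1 v)
    (hgap : ∀ p ∈ S, ∀ p' ∈ S, p < p' → p + ℓ ≤ p')
    (hr : (ℓ - 1) ^ 2 + ℓ * ((2 * ℓ - 3) * (ℓ - 2)) < #S) :
    ∃ f, IsPartialSeq v ℓ B S (Icc 1 v \ S) f := by
  suffices ∀ q ≤ v, ∃ f, IsPartialSeq v ℓ B S (Icc 1 q \ S) f from this v le_rfl
  intro q
  induction q with
  | zero =>
    refine fun _ => ⟨id, ?_⟩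
    rw [Icc_eq_empty (by omega), empty_sdiff]
    refine isPartialSeq_empty ?_
    rcases ℓ.eq_zero_or_pos with rfl | hℓ
    · simp
    · nlinarith
  | succ q ih =>
    intro hq
    obtain ⟨f, hf⟩ := ih (by omega)
    exact hB.exists_isPartialSeq_succ hS hgap hr hq hf

lemma IsSTS.exists_injective_unblocked (hB : IsSTS v B) (hf : IsPartialSeq v ℓ B S N f)
    (hSN : Disjoint S N) (hcard : #S ≤ #(Icc 1 v \ N.image f)) :
    ∃ g : S → ℕ, Function.Injective g ∧
      ∀ p : S, g p ∈ Icc 1 v \ N.image f ∧ ↑p ∉ blockedSlots B ℓ S N f (g p) := by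
  set U := Icc 1 v \ N.image f
  set admissible : S → Finset ℕ := fun p => {y ∈ U | ↑p ∉ blockedSlots B ℓ S N f y}
  have hadm : ∀ p : S, #S - (2 * ℓ - 3) * (ℓ - 2) ≤ #(admissible p) := fun p => by
    have := card_filter_add_card_filter_not (s := U) (↑p ∈ blockedSlots B ℓ S N f ·)
    have := hB.card_filter_mem_blockedSlots_le (ℓ := ℓ) (S := S) (f := f)
      (disjoint_left.1 hSN p.2) U
    simp only [admissible]
    generalize (2 * ℓ - 3) * (ℓ - 2) = b at *
    omega
  have hall : ∀ T : Finset S, #T ≤ #(T.biUnion admissible) := by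
    intro T
    rcases le_or_gt #T (#S - (2 * ℓ - 3) * (ℓ - 2)) with hT | hT
    · obtain rfl | ⟨p, hp⟩ := T.eq_empty_or_nonempty
      · simp
      exact hT.trans ((hadm p).trans (card_le_card (subset_biUnion_of_mem admissible hp)))
    -- an unplaced point is blocked at fewer than `#T` positions, hence admissible at one of `T`
    calc #T ≤ #S := (card_le_univ T).trans (by simp)
      _ ≤ #U := hcard
      _ ≤ #(T.biUnion admissible) := card_le_card fun y hy => ?_
    obtain ⟨p, hpT, hp⟩ : ∃ p ∈ T, ↑p ∉ blockedSlots B ℓ S N f y := by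
      by_contra! h
      have := card_le_card (s := T.map (Function.Embedding.subtype _))
        fun p hp => by obtain ⟨p, hpT, rfl⟩ := mem_map.1 hp; exact h p hpT
      have := hf.card_blockedSlots_add_le y hy
      rw [card_map] at *
      omega
    exact mem_biUnion.2 ⟨p, hpT, mem_filter.2 ⟨hy, hp⟩⟩
  obtain ⟨g, hg, hgadm⟩ := (all_card_le_biUnion_card_iff_exists_injective admissible).1 hall
  exact ⟨g, hg, fun p => mem_filter.1 (hgadm p)⟩

def completeSeq (S : Finset ℕ) (g : S → ℕ) (f : ℕ → ℕ) (n : ℕ) : ℕ :=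
  if h : n ∈ S then g ⟨n, h⟩ else f n

lemma completeSeq_of_mem {g : S → ℕ} (h : n ∈ S) : completeSeq S g f n = g ⟨n, h⟩ := dif_pos h

lemma completeSeq_of_notMem {g : S → ℕ} (h : n ∉ S) : completeSeq S g f n = f n := dif_neg h

lemma IsPartialSeq.mapsTo_completeSeq {g : S → ℕ} (hf : IsPartialSeq v ℓ B S (Icc 1 v \ S) f)
    (hgU : ∀ p, g p ∈ Icc 1 v \ (Icc 1 v \ S).image f) :
    Set.MapsTo (completeSeq S g f) (Set.Icc 1 v) (Set.Icc 1 v) := by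
  intro n hn
  rw [Set.mem_Icc] at hn
  by_cases h : n ∈ S
  · simpa [completeSeq_of_mem h] using (mem_sdiff.1 (hgU ⟨n, h⟩)).1
  · simpa [completeSeq_of_notMem h] using hf.mapsTo n (by simp [hn, h])

lemma IsPartialSeq.injOn_completeSeq {g : S → ℕ} (hf : IsPartialSeq v ℓ B S (Icc 1 v \ S) f)
    (hg : Function.Injective g) (hgU : ∀ p, g p ∈ Icc 1 v \ (Icc 1 v \ S).image f) :
    Set.InjOn (completeSeq S g f) (Set.Icc 1 v) := by
  have hmem : ∀ {m}, m ∈ Set.Icc 1 v → m ∉ S → m ∈ Icc 1 v \ S := fun hm h => by simp_all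
  have hfg : ∀ m (hm : m ∈ S) m', m' ∈ Icc 1 v \ S →
      completeSeq S g f m ≠ completeSeq S g f m' := by
    intro m hm m' hm' h
    rw [completeSeq_of_mem hm, completeSeq_of_notMem (mem_sdiff.1 hm').2] at h
    exact (mem_sdiff.1 (hgU ⟨m, hm⟩)).2 (h ▸ mem_image_of_mem f hm')
  intro n hn n' hn' heq
  by_cases h : n ∈ S <;> by_cases h' : n' ∈ S
  · rw [completeSeq_of_mem h, completeSeq_of_mem h'] at heq
    exact congrArg Subtype.val (hg heq)
  · exact absurd heq (hfg n h n' (hmem hn' h'))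
  · exact absurd heq.symm (hfg n' h' n (hmem hn h))
  · rw [completeSeq_of_notMem h, completeSeq_of_notMem h'] at heq
    exact hf.injOn (hmem hn h) (hmem hn' h') heq

lemma IsPartialSeq.completeSeq_triple_not_mem {g : S → ℕ}
    (hf : IsPartialSeq v ℓ B S (Icc 1 v \ S) f) (hgap : ∀ p ∈ S, ∀ p' ∈ S, p < p' → p + ℓ ≤ p')
    (hgB : ∀ p : S, ↑p ∉ blockedSlots B ℓ S (Icc 1 v \ S) f (g p)) {a c e : ℕ} (ha : 1 ≤ a)
    (hac : a < c) (hce : c < e) (hea : e < a + ℓ) (hev : e ≤ v) :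
    {completeSeq S g f a, completeSeq S g f c, completeSeq S g f e} ∉ B := by
  have hN : ∀ {m}, 1 ≤ m → m ≤ v → m ∉ S → m ∈ Icc 1 v \ S := fun h1 h2 h3 => by simp [*]
  have hslot : ∀ s t p (hp : p ∈ S), s ∈ Icc 1 v \ S → t ∈ Icc 1 v \ S →
      s < t → t < s + ℓ → t < p + ℓ → p < s + ℓ → {f s, f t, completeSeq S g f p} ∉ B := by
    intro s t p hp hs ht hst hts htp hps hmem
    rw [completeSeq_of_mem hp] at hmem
    have hnear : (s, t) ∈ nearPairs ℓ (Icc 1 v \ S) p :=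
      mem_filter.2 ⟨mem_product.2 ⟨hs, ht⟩, hst, hts, htp, hps⟩
    exact hgB ⟨p, hp⟩ (mem_filter.2 ⟨hp, (s, t), hnear, hmem⟩)
  -- reserved positions are `ℓ` apart, so at most one of `a, c, e` is reserved
  by_cases haS : a ∈ S <;> by_cases hcS : c ∈ S <;> by_cases heS : e ∈ S
  all_goals first
    | (have := hgap a haS c hcS hac; omega)
    | (have := hgap c hcS e heS hce; omega)
    | (have := hgap a haS e heS (by omega); omega)
    | skip
  · rw [completeSeq_of_notMem hcS, completeSeq_of_notMem heS, insert_comm, pair_comm]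
    exact hslot c e a haS (hN (by omega) (by omega) hcS) (hN (by omega) hev heS)
      hce (by omega) (by omega) (by omega)
  · rw [completeSeq_of_notMem haS, completeSeq_of_notMem heS, pair_comm]
    exact hslot a e c hcS (hN ha (by omega) haS) (hN (by omega) hev heS)
      (by omega) hea (by omega) (by omega)
  · rw [completeSeq_of_notMem haS, completeSeq_of_notMem hcS]
    exact hslot a c e heS (hN ha (by omega) haS) (hN (by omega) (by omega) hcS)
      hac (by omega) (by omega) hea
  · rw [completeSeq_of_notMem haS, completeSeq_of_notMem hcS, completeSeq_of_notMem heS]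
    exact hf.triple_not_mem a (hN ha (by omega) haS) c (hN (by omega) (by omega) hcS)
      e (hN (by omega) hev heS) hac hce hea

theorem IsSTS.exists_isGoodSeq_of_reserved (hB : IsSTS v B) (hS : S ⊆ Icc 1 v)
    (hgap : ∀ p ∈ S, ∀ p' ∈ S, p < p' → p + ℓ ≤ p')
    (hr : (ℓ - 1) ^ 2 + ℓ * ((2 * ℓ - 3) * (ℓ - 2)) < #S) :
    ∃ x, IsGoodSeq v ℓ B x := by
  obtain ⟨f, hf⟩ := hB.exists_isPartialSeq hS hgap hr
  have hcard : #S ≤ #(Icc 1 v \ (Icc 1 v \ S).image f) := by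
    have := card_le_card hS
    rw [hf.card_sdiff_image, card_sdiff_of_subset hS]
    rw [Nat.card_Icc] at *
    omega
  obtain ⟨g, hg, hgU⟩ := hB.exists_injective_unblocked hf disjoint_sdiff hcard
  exact ⟨completeSeq S g f, isGoodSeq_of_forall_lt (fun b hb => (hB.1 b hb).2)
    (hf.mapsTo_completeSeq fun p => (hgU p).1) (hf.injOn_completeSeq hg fun p => (hgU p).1)
    fun _ _ _ => hf.completeSeq_triple_not_mem hgap fun p => (hgU p).2⟩

theorem IsSTS.exists_isGoodSeq_of_mul_le (hB : IsSTS v B) (hℓ : 0 < ℓ) (hrv : r * ℓ ≤ v)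
    (hr : (ℓ - 1) ^ 2 + ℓ * ((2 * ℓ - 3) * (ℓ - 2)) < r) : ∃ x, IsGoodSeq v ℓ B x := by
  refine hB.exists_isGoodSeq_of_reserved (S := (Icc 1 r).image (· * ℓ)) ?_ ?_ ?_
  · intro p hp
    obtain ⟨i, hi, rfl⟩ := mem_image.1 hp
    rw [mem_Icc] at hi ⊢
    constructor <;> nlinarith
  · intro p hp p' hp' hpp'
    obtain ⟨i, -, rfl⟩ := mem_image.1 hp
    obtain ⟨j, -, rfl⟩ := mem_image.1 hp'
    have : i < j := lt_of_mul_lt_mul_right hpp' (Nat.zero_le _)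
    nlinarith
  · rwa [card_image_of_injective _ (mul_left_injective₀ hℓ.ne'), Nat.card_Icc,
      Nat.add_sub_cancel]

end Construction

lemma lt_pow_five_div_sixteen {ℓ : ℕ} (hℓ : 3 ≤ ℓ) :
    (ℓ - 1) ^ 2 + ℓ * ((2 * ℓ - 3) * (ℓ - 2)) < ℓ ^ 5 / 16 := by
  obtain ⟨k, rfl⟩ : ∃ k, ℓ = k + 3 := ⟨ℓ - 3, by omega⟩
  rw [Nat.lt_iff_add_one_le, Nat.le_div_iff_mul_le (by norm_num), show k + 3 - 1 = k + 2 by omega,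
    show 2 * (k + 3) - 3 = 2 * k + 3 by omega, show k + 3 - 2 = k + 1 by omega]
  have : (k + 3) ^ 5 = ((k + 2) ^ 2 + (k + 3) * ((2 * k + 3) * (k + 1)) + 1) * 16 +
      (k ^ 5 + 15 * k ^ 4 + 58 * k ^ 3 + 78 * k ^ 2 + 53 * k + 19) := by ring
  omega

/-- For every integer `ℓ ≥ 3`, every Steiner triple system of order `v` with `v ≥ ℓ^6/16`
has an `ℓ`-good sequencing. -/
theorem sts_good_sequencing_of_ge_pow_six_div_sixteen
    (ℓ v : ℕ) (hℓ : 3 ≤ ℓ) (B : Finset (Finset ℕ)) (hSTS : IsSTS v B)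
    (hv : (ℓ : ℚ) ^ 6 / 16 ≤ (v : ℚ)) :
    ∃ x : ℕ → ℕ, IsGoodSeq v ℓ B x := by
  have hv' : ℓ ^ 6 ≤ 16 * v := by exact_mod_cast (by linarith : (ℓ : ℚ) ^ 6 ≤ 16 * v)
  refine hSTS.exists_isGoodSeq_of_mul_le (r := ℓ ^ 5 / 16) (by omega) ?_
    (lt_pow_five_div_sixteen hℓ)
  have := Nat.mul_le_mul_right ℓ (Nat.mul_div_le (ℓ ^ 5) 16)
  nlinarith
end

section
/- For every integer ℓ ≥ 3, there exists an integer n(ℓ) such that every Steiner triple system of order v with v > n(ℓ) has an ℓ-good sequencing. -/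
/-!
Reserve the positions divisible by `2ℓ`; any window of `ℓ` consecutive positions contains at
most one of them. First place points greedily at the other positions so that no three close
positions carry a block. When the last points have to go to the reserved positions, a point
is unusable at a reserved position `p` only if it completes a block with two placed points
near `p`; each `p` thus excludes `O(ℓ²)` points. Conversely, a leftover point `z` is excluded
at no more reserved positions than its *load*, the number of close placed pairs completing
a block with `z`, because a close pair is near at most one reserved position. The greedy
step therefore also keeps every load at most `144ℓ³ + 4ℓ`: by double counting only few
points have load `≥ 144ℓ³`, and the new point is chosen so as not to raise their loads.
Hall's theorem then matches the leftover points to the reserved positions.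
-/

open Finset

def Close (ℓ q q' : ℕ) : Prop := q < q' + ℓ ∧ q' < q + ℓ

instance (ℓ q q' : ℕ) : Decidable (Close ℓ q q') := inferInstanceAs (Decidable (_ ∧ _))

lemma Close.symm {ℓ q q' : ℕ} (h : Close ℓ q q') : Close ℓ q' q := ⟨h.2, h.1⟩

def WellSpaced (ℓ : ℕ) (P : Finset ℕ) : Prop :=
  ∀ p ∈ P, ∀ p' ∈ P, ∀ q, Close ℓ q p → Close ℓ q p' → p = p'

lemma wellSpaced_singleton (ℓ p : ℕ) : WellSpaced ℓ {p} := by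
  simp [WellSpaced]

lemma wellSpaced_filter_dvd (ℓ : ℕ) (S : Finset ℕ) : WellSpaced ℓ (S.filter (2 * ℓ ∣ ·)) := by
  simp only [WellSpaced, mem_filter]
  rintro _ ⟨-, a, rfl⟩ _ ⟨-, b, rfl⟩ q ⟨h₁, h₂⟩ ⟨h₃, h₄⟩
  have hab : a < b + 1 := Nat.lt_of_mul_lt_mul_left (a := 2 * ℓ) (by linarith)
  have hba : b < a + 1 := Nat.lt_of_mul_lt_mul_left (a := 2 * ℓ) (by linarith)
  rw [show a = b by omega]

def blockSpan (B : Finset (Finset ℕ)) (a b : ℕ) : Finset ℕ :=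
  (B.filter fun t => a ∈ t ∧ b ∈ t).biUnion id

section blockSpan

variable {B : Finset (Finset ℕ)} {a b c : ℕ}

lemma mem_blockSpan : c ∈ blockSpan B a b ↔ ∃ t ∈ B, a ∈ t ∧ b ∈ t ∧ c ∈ t := by
  simp [blockSpan, and_assoc]

lemma mem_blockSpan_swap : c ∈ blockSpan B a b ↔ b ∈ blockSpan B a c := by
  simp only [mem_blockSpan]
  grind

lemma mem_blockSpan_rotate : c ∈ blockSpan B a b ↔ a ∈ blockSpan B b c := by
  simp only [mem_blockSpan]
  grind

lemma IsSTS.card_blockSpan_le {v : ℕ} (hB : IsSTS v B) (ha : a ∈ Icc 1 v) (hb : b ∈ Icc 1 v)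
    (hab : a ≠ b) : (blockSpan B a b).card ≤ 3 := by
  obtain ⟨t, ⟨htB, -⟩, ht⟩ := hB.2 a ha b hb hab
  calc (blockSpan B a b).card ≤ t.card := card_le_card fun c hc => by
        obtain ⟨s, hs, has, hbs, hcs⟩ := mem_blockSpan.1 hc
        rwa [ht s ⟨hs, has, hbs⟩] at hcs
    _ = 3 := (hB.1 t htB).2

end blockSpan

def closePairs (ℓ : ℕ) (S : Finset ℕ) : Finset (ℕ × ℕ) :=
  (S ×ˢ S).filter fun e => e.1 ≠ e.2 ∧ Close ℓ e.1 e.2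

section closePairs

variable {ℓ : ℕ} {S : Finset ℕ}

@[simp]
lemma mem_closePairs {e : ℕ × ℕ} :
    e ∈ closePairs ℓ S ↔ e.1 ∈ S ∧ e.2 ∈ S ∧ e.1 ≠ e.2 ∧ Close ℓ e.1 e.2 := by
  simp [closePairs, and_assoc]

lemma card_filter_close_le (p : ℕ) : (S.filter (Close ℓ · p)).card ≤ 2 * ℓ :=
  calc _ ≤ (Ico (p + 1 - ℓ) (p + ℓ)).card := card_le_card fun q hq => by
        rw [mem_filter] at hq
        obtain ⟨-, h₁, h₂⟩ := hq
        rw [mem_Ico]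
        omega
    _ ≤ 2 * ℓ := by simp only [Nat.card_Ico]; omega

lemma card_closePairs_le : (closePairs ℓ S).card ≤ 2 * ℓ * S.card :=
  calc _ ≤ (S ×ˢ range (2 * ℓ)).card := by
        refine card_le_card_of_injOn (fun e => (e.1, e.2 + ℓ - e.1)) (fun e he => ?_) ?_
        · obtain ⟨h₁, -, -, h₂, h₃⟩ := mem_closePairs.1 he
          simp only [mem_coe, mem_product, mem_range]
          exact ⟨h₁, by omega⟩
        · rintro ⟨a, c⟩ he ⟨a', c'⟩ he' h
          simp only [mem_coe, mem_closePairs, Close, Prod.mk.injEq] at he he' h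
          simp only [Prod.mk.injEq]
          omega
    _ = 2 * ℓ * S.card := by rw [card_product, card_range, mul_comm]

end closePairs

section placement

variable {ℓ v : ℕ} {B : Finset (Finset ℕ)} {S P : Finset ℕ} {f g x : ℕ → ℕ}

def load (ℓ : ℕ) (B : Finset (Finset ℕ)) (S : Finset ℕ) (f : ℕ → ℕ) (z : ℕ) : ℕ :=
  ((closePairs ℓ S).filter fun e => z ∈ blockSpan B (f e.1) (f e.2)).card

def forbidden (ℓ : ℕ) (B : Finset (Finset ℕ)) (S : Finset ℕ) (f : ℕ → ℕ) (p : ℕ) : Finset ℕ :=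
  ((closePairs ℓ S).filter fun e => Close ℓ e.1 p ∧ Close ℓ e.2 p).biUnion
    fun e => blockSpan B (f e.1) (f e.2)

lemma mem_forbidden {y p : ℕ} : y ∈ forbidden ℓ B S f p ↔
    ∃ e ∈ closePairs ℓ S, Close ℓ e.1 p ∧ Close ℓ e.2 p ∧ y ∈ blockSpan B (f e.1) (f e.2) := by
  simp only [forbidden, mem_biUnion, mem_filter, and_assoc]

lemma forbidden_congr (hfg : Set.EqOn f g S) (p : ℕ) :
    forbidden ℓ B S f p = forbidden ℓ B S g p := by
  refine biUnion_congr rfl fun e he => ?_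
  obtain ⟨h₁, h₂, -⟩ := mem_closePairs.1 (mem_filter.1 he).1
  rw [hfg h₁, hfg h₂]

lemma card_forbidden_le (hB : IsSTS v B) (hf : ∀ q ∈ S, f q ∈ Icc 1 v) (hinj : Set.InjOn f S)
    (p : ℕ) : (forbidden ℓ B S f p).card ≤ 12 * ℓ ^ 2 := by
  set near := S.filter (Close ℓ · p)
  have hpairs : ((closePairs ℓ S).filter fun e => Close ℓ e.1 p ∧ Close ℓ e.2 p) ⊆
      near ×ˢ near := fun e he => by
    obtain ⟨he, h₁, h₂⟩ := mem_filter.1 he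
    obtain ⟨hS₁, hS₂, -⟩ := mem_closePairs.1 he
    exact mem_product.2 ⟨mem_filter.2 ⟨hS₁, h₁⟩, mem_filter.2 ⟨hS₂, h₂⟩⟩
  calc (forbidden ℓ B S f p).card
      ≤ ((closePairs ℓ S).filter fun e => Close ℓ e.1 p ∧ Close ℓ e.2 p).card * 3 := by
        refine card_biUnion_le_card_mul _ _ _ fun e he => ?_
        obtain ⟨h₁, h₂, hne, -⟩ := mem_closePairs.1 (mem_filter.1 he).1
        exact hB.card_blockSpan_le (hf _ h₁) (hf _ h₂) fun h => hne (hinj h₁ h₂ h)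
    _ ≤ (near ×ˢ near).card * 3 := Nat.mul_le_mul_right _ (card_le_card hpairs)
    _ ≤ (2 * ℓ) * (2 * ℓ) * 3 := by
        rw [card_product]
        have := card_filter_close_le (ℓ := ℓ) (S := S) p
        gcongr
    _ = 12 * ℓ ^ 2 := by ring

lemma sum_load_le (hB : IsSTS v B) (hf : ∀ q ∈ S, f q ∈ Icc 1 v) (hinj : Set.InjOn f S)
    (Z : Finset ℕ) : ∑ z ∈ Z, load ℓ B S f z ≤ 6 * ℓ * S.card := by
  calc ∑ z ∈ Z, load ℓ B S f z
      = ∑ e ∈ closePairs ℓ S, (Z.filter fun z => z ∈ blockSpan B (f e.1) (f e.2)).card :=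
        sum_card_bipartiteAbove_eq_sum_card_bipartiteBelow _
    _ ≤ ∑ _e ∈ closePairs ℓ S, 3 := sum_le_sum fun e he => by
        obtain ⟨h₁, h₂, hne, -⟩ := mem_closePairs.1 he
        exact (card_le_card fun z hz => (mem_filter.1 hz).2).trans
          (hB.card_blockSpan_le (hf _ h₁) (hf _ h₂) fun h => hne (hinj h₁ h₂ h))
    _ ≤ 6 * ℓ * S.card := by
        rw [sum_const, smul_eq_mul]
        linarith [card_closePairs_le (ℓ := ℓ) (S := S)]

lemma card_filter_mem_forbidden_le_load (hP : WellSpaced ℓ P) (u : ℕ) :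
    (P.filter fun p => u ∈ forbidden ℓ B S f p).card ≤ load ℓ B S f u := by
  refine card_le_card_of_forall_subsingleton (fun p e => Close ℓ e.1 p) (fun p hp => ?_)
    fun e _ p hp p' hp' => hP p (mem_filter.1 hp.1).1 p' (mem_filter.1 hp'.1).1 e.1 hp.2 hp'.2
  obtain ⟨e, he, h₁, -, hu⟩ := mem_forbidden.1 (mem_filter.1 hp).2
  exact ⟨e, mem_filter.2 ⟨he, hu⟩, h₁⟩

def TripleFree (ℓ : ℕ) (B : Finset (Finset ℕ)) (S : Finset ℕ) (x : ℕ → ℕ) : Prop :=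
  ∀ q₁ ∈ S, ∀ q₂ ∈ S, ∀ q₃ ∈ S, q₁ ≠ q₂ → q₁ ≠ q₃ → q₂ ≠ q₃ →
    Close ℓ q₁ q₂ → Close ℓ q₁ q₃ → Close ℓ q₂ q₃ → x q₃ ∉ blockSpan B (x q₁) (x q₂)

lemma TripleFree.congr (h : TripleFree ℓ B S f) (hfg : Set.EqOn f g S) : TripleFree ℓ B S g := by
  intro q₁ h₁ q₂ h₂ q₃ h₃
  rw [← hfg h₁, ← hfg h₂, ← hfg h₃]
  exact h q₁ h₁ q₂ h₂ q₃ h₃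

lemma TripleFree.union (hS : TripleFree ℓ B S x) (hP : ∀ p ∈ P, x p ∉ forbidden ℓ B S x p)
    (hsp : WellSpaced ℓ P) : TripleFree ℓ B (P ∪ S) x := by
  have key : ∀ a ∈ S, ∀ c ∈ S, ∀ p ∈ P, a ≠ c → Close ℓ a c → Close ℓ a p → Close ℓ c p →
      x p ∉ blockSpan B (x a) (x c) := fun a ha c hc p hp hac hc' hap hcp hmem =>
    hP p hp (mem_forbidden.2 ⟨(a, c), mem_closePairs.2 ⟨ha, hc, hac, hc'⟩, hap, hcp, hmem⟩)
  intro q₁ h₁ q₂ h₂ q₃ h₃ h₁₂ h₁₃ h₂₃ c₁₂ c₁₃ c₂₃ hmem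
  rw [mem_union] at h₁ h₂ h₃
  rcases h₁ with h₁ | h₁ <;> rcases h₂ with h₂ | h₂
  · exact h₁₂ (hsp _ h₁ _ h₂ q₃ c₁₃.symm c₂₃.symm)
  · rcases h₃ with h₃ | h₃
    · exact h₁₃ (hsp _ h₁ _ h₃ q₂ c₁₂.symm c₂₃)
    · refine key q₂ h₂ q₃ h₃ q₁ h₁ h₂₃ c₂₃ c₁₂.symm c₁₃.symm ?_
      rwa [← mem_blockSpan_rotate]
  · rcases h₃ with h₃ | h₃
    · exact h₂₃ (hsp _ h₂ _ h₃ q₁ c₁₂ c₁₃)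
    · exact key q₁ h₁ q₃ h₃ q₂ h₂ h₁₃ c₁₃ c₁₂ c₂₃.symm (mem_blockSpan_swap.1 hmem)
  · rcases h₃ with h₃ | h₃
    · exact key q₁ h₁ q₂ h₂ q₃ h₃ h₁₂ c₁₂ c₁₃ c₂₃ hmem
    · exact hS q₁ h₁ q₂ h₂ q₃ h₃ h₁₂ h₁₃ h₂₃ c₁₂ c₁₃ c₂₃ hmem

end placement

structure IsPartialSeq_s2 (ℓ v : ℕ) (B : Finset (Finset ℕ)) (S : Finset ℕ) (f : ℕ → ℕ) : Prop where
  mapsTo : ∀ q ∈ S, f q ∈ Icc 1 v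
  injOn : Set.InjOn f S
  tripleFree : TripleFree ℓ B S f
  load_le : ∀ z ∈ Icc 1 v, z ∉ S.image f → load ℓ B S f z ≤ 144 * ℓ ^ 3 + 4 * ℓ

def heavy (ℓ v : ℕ) (B : Finset (Finset ℕ)) (S : Finset ℕ) (f : ℕ → ℕ) : Finset ℕ :=
  (Icc 1 v \ S.image f).filter fun z => 144 * ℓ ^ 3 ≤ load ℓ B S f z

section greedy

variable {ℓ v : ℕ} {B : Finset (Finset ℕ)} {S : Finset ℕ} {f : ℕ → ℕ} {p y : ℕ}

lemma load_insert_le (hp : p ∉ S) (z : ℕ) :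
    load ℓ B (insert p S) (Function.update f p y) z ≤
      load ℓ B S f z +
        2 * ((S.filter (Close ℓ · p)).filter fun q => y ∈ blockSpan B (f q) z).card := by
  set Q := (S.filter (Close ℓ · p)).filter fun q => y ∈ blockSpan B (f q) z
  have hfS : ∀ q ∈ S, Function.update f p y q = f q := fun q hq =>
    Function.update_of_ne (by rintro rfl; exact hp hq) _ _
  have hsub : ((closePairs ℓ (insert p S)).filter
      fun e => z ∈ blockSpan B (Function.update f p y e.1) (Function.update f p y e.2)) ⊆
      ((closePairs ℓ S).filter fun e => z ∈ blockSpan B (f e.1) (f e.2)) ∪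
        (Q.image (·, p) ∪ Q.image (p, ·)) := by
    rintro ⟨a, c⟩ he
    simp only [mem_filter, mem_closePairs, mem_insert] at he
    obtain ⟨⟨ha, hc, hac, hclose⟩, hz⟩ := he
    simp only [mem_union, mem_filter, mem_image, mem_closePairs, Q, Prod.mk.injEq]
    rcases ha with rfl | ha
    · have hc : c ∈ S := hc.resolve_left (Ne.symm hac)
      rw [Function.update_self, hfS c hc] at hz
      exact Or.inr (Or.inr ⟨c, ⟨⟨hc, hclose.symm⟩, mem_blockSpan_rotate.1 hz⟩, rfl, rfl⟩)
    rcases hc with rfl | hc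
    · rw [Function.update_self, hfS a ha] at hz
      exact Or.inr (Or.inl ⟨a, ⟨⟨ha, hclose⟩, mem_blockSpan_swap.1 hz⟩, rfl, rfl⟩)
    · rw [hfS a ha, hfS c hc] at hz
      exact Or.inl ⟨⟨ha, hc, hac, hclose⟩, hz⟩
  calc _ ≤ _ := card_le_card hsub
    _ ≤ load ℓ B S f z + ((Q.image (·, p)).card + (Q.image (p, ·)).card) :=
        (card_union_le _ _).trans (Nat.add_le_add_left (card_union_le _ _) _)
    _ ≤ _ := by
        linarith [card_image_le (s := Q) (f := (·, p)), card_image_le (s := Q) (f := (p, ·))]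

lemma IsPartialSeq_s2.insert (hf : IsPartialSeq_s2 ℓ v B S f) (hp : p ∉ S) (hy : y ∈ Icc 1 v)
    (hyS : y ∉ S.image f) (hyF : y ∉ forbidden ℓ B S f p)
    (hyH : ∀ q ∈ S, Close ℓ q p → ∀ z ∈ heavy ℓ v B S f, y ∉ blockSpan B (f q) z) :
    IsPartialSeq_s2 ℓ v B (insert p S) (Function.update f p y) := by
  have hfS : Set.EqOn f (Function.update f p y) S := fun q hq =>
    (Function.update_of_ne (by rintro rfl; exact hp hq) _ _).symm
  refine ⟨fun q hq => ?_, ?_, ?_, fun z hz hzS => ?_⟩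
  · rcases mem_insert.1 hq with rfl | hq
    · rwa [Function.update_self]
    · rw [← hfS hq]; exact hf.mapsTo q hq
  · rw [coe_insert, Set.injOn_insert (by simpa using hp), Function.update_self,
      ← hfS.injOn_iff, ← hfS.image_eq]
    exact ⟨hf.injOn, by simpa using hyS⟩
  · rw [insert_eq]
    refine (hf.tripleFree.congr hfS).union (fun q hq => ?_) (wellSpaced_singleton ℓ p)
    rw [mem_singleton.1 hq, Function.update_self, ← forbidden_congr hfS]
    exact hyF
  · have hzS' : z ∉ S.image f := fun h => hzS (by
      obtain ⟨q, hq, rfl⟩ := mem_image.1 h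
      exact mem_image.2 ⟨q, mem_insert_of_mem hq, (hfS hq).symm⟩)
    refine (load_insert_le hp z).trans ?_
    by_cases hz_heavy : 144 * ℓ ^ 3 ≤ load ℓ B S f z
    · have hzH : z ∈ heavy ℓ v B S f := mem_filter.2 ⟨mem_sdiff.2 ⟨hz, hzS'⟩, hz_heavy⟩
      rw [filter_eq_empty_iff.2 fun q hq => hyH q (mem_filter.1 hq).1 (mem_filter.1 hq).2 z hzH,
        card_empty]
      exact hf.load_le z hz hzS'
    · have := (card_filter_le (S.filter (Close ℓ · p)) fun q => y ∈ blockSpan B (f q) z).trans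
        (card_filter_close_le p)
      linarith

lemma IsPartialSeq_s2.card_heavy_mul_le (hB : IsSTS v B) (hf : IsPartialSeq_s2 ℓ v B S f) :
    (heavy ℓ v B S f).card * (144 * ℓ ^ 3) ≤ 6 * ℓ * S.card :=
  calc (heavy ℓ v B S f).card * (144 * ℓ ^ 3)
      ≤ ∑ z ∈ heavy ℓ v B S f, load ℓ B S f z := by
        rw [← smul_eq_mul, ← sum_const]
        exact sum_le_sum fun z hz => (mem_filter.1 hz).2
    _ ≤ 6 * ℓ * S.card := sum_load_le hB hf.mapsTo hf.injOn _

lemma IsPartialSeq_s2.exists_point (hℓ : 0 < ℓ) (hB : IsSTS v B) (hf : IsPartialSeq_s2 ℓ v B S f)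
    (hroom : 4 * ℓ * (S.card + 1 + 12 * ℓ ^ 2) + v ≤ 4 * ℓ * v) (p : ℕ) :
    ∃ y ∈ Icc 1 v, y ∉ S.image f ∧ y ∉ forbidden ℓ B S f p ∧
      ∀ q ∈ S, Close ℓ q p → ∀ z ∈ heavy ℓ v B S f, y ∉ blockSpan B (f q) z := by
  set H := heavy ℓ v B S f
  set near := S.filter (Close ℓ · p)
  set U := S.image f ∪ forbidden ℓ B S f p ∪
    (near ×ˢ H).biUnion fun e => blockSpan B (f e.1) e.2
  have hnear : (near ×ˢ H).card ≤ 2 * ℓ * H.card := by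
    rw [card_product]
    exact Nat.mul_le_mul_right _ (card_filter_close_le p)
  have hH : ((near ×ˢ H).biUnion fun e => blockSpan B (f e.1) e.2).card ≤ 6 * ℓ * H.card := by
    refine (card_biUnion_le_card_mul _ _ 3 fun e he => ?_).trans (by linarith)
    obtain ⟨hq, hz⟩ := mem_product.1 he
    obtain ⟨hz, hzS⟩ := mem_sdiff.1 (mem_filter.1 hz).1
    exact hB.card_blockSpan_le (hf.mapsTo _ (mem_filter.1 hq).1) hz
      fun h => hzS (h ▸ mem_image_of_mem f (mem_filter.1 hq).1)
  have hU : U.card < (Icc 1 v).card := by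
    have hheavy := hf.card_heavy_mul_le hB
    have hSv : S.card ≤ v := by nlinarith
    -- `144ℓ³ = 6ℓ · 24ℓ²`: there are at most `v / (24ℓ²)` heavy points, so their blocks with
    -- the `≤ 2ℓ` placed points near `p` cover at most `v / (4ℓ)` points.
    have hHv : 24 * ℓ ^ 2 * H.card ≤ v :=
      Nat.le_of_mul_le_mul_left (c := 6 * ℓ) (by nlinarith) (by positivity)
    have hroom' : S.card + 12 * ℓ ^ 2 + 6 * ℓ * H.card < v :=
      Nat.lt_of_mul_lt_mul_left (a := 4 * ℓ) (by nlinarith)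
    calc U.card ≤ S.card + 12 * ℓ ^ 2 + 6 * ℓ * H.card :=
          (card_union_le _ _).trans (add_le_add ((card_union_le _ _).trans (add_le_add
            card_image_le (card_forbidden_le hB hf.mapsTo hf.injOn p))) hH)
      _ < (Icc 1 v).card := by simpa using hroom'
  obtain ⟨y, hy, hyU⟩ := exists_mem_notMem_of_card_lt_card hU
  simp only [U, mem_union, not_or, mem_biUnion, mem_product, not_exists, not_and] at hyU
  exact ⟨y, hy, hyU.1.1, hyU.1.2, fun q hq hqp z hz => hyU.2 (q, z) ⟨mem_filter.2 ⟨hq, hqp⟩, hz⟩⟩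

-- `hN` says that at least `12ℓ² + v / (4ℓ)` points remain once `N` is filled.
theorem exists_isPartialSeq (hℓ : 0 < ℓ) (hB : IsSTS v B) (N : Finset ℕ)
    (hN : 4 * ℓ * (N.card + 12 * ℓ ^ 2) + v ≤ 4 * ℓ * v) : ∃ f, IsPartialSeq_s2 ℓ v B N f := by
  induction N using Finset.induction_on with
  | empty =>
    exact ⟨id, by simp, by simp, by simp [TripleFree], fun z _ _ => by simp [load, closePairs]⟩
  | insert p S hp ih =>
    rw [card_insert_of_notMem hp] at hN
    obtain ⟨f, hf⟩ := ih (by nlinarith)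
    obtain ⟨y, hy, hyS, hyF, hyH⟩ := hf.exists_point hℓ hB hN p
    exact ⟨_, hf.insert hp hy hyS hyF hyH⟩

end greedy

theorem exists_injOn_mem_of_card_sdiff_le {ι α : Type*} [DecidableEq α] [Nonempty α]
    {I : Finset ι} {R : Finset α} {t : ι → Finset α} {a b : ℕ}
    (hIR : I.card ≤ R.card) (ht : ∀ i ∈ I, (R \ t i).card ≤ a)
    (hR : ∀ u ∈ R, (I.filter fun i => u ∉ t i).card ≤ b) (hab : a + b ≤ R.card) :
    ∃ g : ι → α, Set.InjOn g I ∧ ∀ i ∈ I, g i ∈ t i := by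
  classical
  -- Hall's condition: for `#s ≤ b` a single `t i` is already large enough, and for `#s > b`
  -- the sets `t i`, `i ∈ s`, cover all of `R`.
  have hall : ∀ s : Finset I, s.card ≤ (s.biUnion fun i => t i).card := by
    intro s
    by_cases hs : s.card ≤ b
    · obtain rfl | ⟨i, hi⟩ := s.eq_empty_or_nonempty
      · simp
      have := ht i i.2
      have := card_le_card_sdiff_add_card (s := R) (t := t i)
      calc s.card ≤ (t i).card := by omega
        _ ≤ _ := card_le_card (subset_biUnion_of_mem (fun i : I => t i) hi)
    · have hcover : R ⊆ s.biUnion fun i => t i := by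
        intro u hu
        by_contra hu'
        refine hs ((card_le_card_of_injOn Subtype.val (fun i hi => ?_)
          Subtype.val_injective.injOn).trans (hR u hu))
        exact mem_filter.2 ⟨i.2, fun h => hu' (mem_biUnion.2 ⟨i, hi, h⟩)⟩
      calc s.card ≤ I.card :=
            card_le_card_of_injOn Subtype.val (fun i _ => i.2) Subtype.val_injective.injOn
        _ ≤ R.card := hIR
        _ ≤ _ := card_le_card hcover
  obtain ⟨m, hm_inj, hm⟩ := (all_card_le_biUnion_card_iff_exists_injective _).1 hall
  refine ⟨fun i => if h : i ∈ I then m ⟨i, h⟩ else Classical.arbitrary α,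
    fun i hi j hj hij => ?_, fun i hi => ?_⟩
  · simp only [mem_coe] at hi hj
    simp only [dif_pos hi, dif_pos hj] at hij
    exact congrArg Subtype.val (hm_inj hij)
  · simpa [dif_pos hi] using hm ⟨i, hi⟩

lemma bijOn_piecewise {α : Type*} [DecidableEq α] {X F N : Finset α} {f g : α → α}
    (hX : F ∪ N = X) (hdisj : Disjoint F N) (hf : ∀ q ∈ N, f q ∈ X) (hf_inj : Set.InjOn f N)
    (hg : ∀ p ∈ F, g p ∈ X \ N.image f) (hg_inj : Set.InjOn g F) :
    Set.BijOn (F.piecewise g f) X X := by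
  have hxF : Set.EqOn (F.piecewise g f) g F := fun q hq => piecewise_eq_of_mem _ _ _ hq
  have hxN : Set.EqOn (F.piecewise g f) f N := fun q hq =>
    piecewise_eq_of_notMem _ _ _ (disjoint_right.1 hdisj hq)
  subst hX
  refine ((F ∪ N).finite_toSet.injOn_iff_bijOn_of_mapsTo fun q hq => ?_).1 ?_
  · rcases mem_union.1 hq with hq | hq
    · rw [hxF hq]; exact (mem_sdiff.1 (hg q hq)).1
    · rw [hxN hq]; exact hf q hq
  · rw [coe_union, Set.injOn_union (disjoint_coe.2 hdisj), hxF.injOn_iff, hxN.injOn_iff]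
    refine ⟨hg_inj, hf_inj, fun p hp q hq h => (mem_sdiff.1 (hg p hp)).2 ?_⟩
    rw [hxF hp, hxN hq] at h
    exact h ▸ mem_image_of_mem f hq

lemma isGoodSeq_of_tripleFree {ℓ v : ℕ} {B : Finset (Finset ℕ)} {x : ℕ → ℕ}
    (hB : ∀ b ∈ B, b.card = 3) (hx : Set.BijOn x (Set.Icc 1 v) (Set.Icc 1 v))
    (ht : TripleFree ℓ B (Icc 1 v) x) : IsGoodSeq v ℓ B x := by
  refine ⟨hx, fun i hi b hb hsub => ?_⟩
  obtain ⟨u₁, u₂, u₃, h₁₂, h₁₃, h₂₃, rfl⟩ := card_eq_three.1 (hB b hb)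
  obtain ⟨q₁, ⟨⟨w₁, w₁'⟩, hq₁⟩, rfl⟩ := hsub (by simp : u₁ ∈ (({u₁, u₂, u₃} : Finset ℕ) : Set ℕ))
  obtain ⟨q₂, ⟨⟨w₂, w₂'⟩, hq₂⟩, rfl⟩ := hsub (by simp : u₂ ∈ (({x q₁, u₂, u₃} : Finset ℕ) : Set ℕ))
  obtain ⟨q₃, ⟨⟨w₃, w₃'⟩, hq₃⟩, rfl⟩ :=
    hsub (by simp : u₃ ∈ (({x q₁, x q₂, u₃} : Finset ℕ) : Set ℕ))
  exact ht q₁ (by simpa using hq₁) q₂ (by simpa using hq₂) q₃ (by simpa using hq₃)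
    (ne_of_apply_ne x h₁₂) (ne_of_apply_ne x h₁₃) (ne_of_apply_ne x h₂₃)
    ⟨by omega, by omega⟩ ⟨by omega, by omega⟩ ⟨by omega, by omega⟩
    (mem_blockSpan.2 ⟨_, hb, by simp, by simp, by simp⟩)

section completion

variable {ℓ v : ℕ} {B : Finset (Finset ℕ)} {N F : Finset ℕ} {f g : ℕ → ℕ}

lemma IsPartialSeq_s2.exists_completion (hB : IsSTS v B) (hf : IsPartialSeq_s2 ℓ v B N f)
    (hF : WellSpaced ℓ F) (hFN : F.card + N.card ≤ v)
    (hFcard : 12 * ℓ ^ 2 + (144 * ℓ ^ 3 + 4 * ℓ) ≤ F.card) :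
    ∃ g : ℕ → ℕ, Set.InjOn g F ∧ ∀ p ∈ F, g p ∈ (Icc 1 v \ N.image f) \ forbidden ℓ B N f p := by
  have hR : (Icc 1 v \ N.image f).card = v - N.card := by
    rw [card_sdiff_of_subset (image_subset_iff.2 hf.mapsTo), card_image_of_injOn hf.injOn,
      Nat.card_Icc, Nat.add_sub_cancel]
  refine exists_injOn_mem_of_card_sdiff_le (I := F) (R := Icc 1 v \ N.image f)
    (a := 12 * ℓ ^ 2) (b := 144 * ℓ ^ 3 + 4 * ℓ) (by omega) (fun p _ => ?_) (fun u hu => ?_)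
    (by omega)
  · refine (card_le_card fun u hu => ?_).trans (card_forbidden_le hB hf.mapsTo hf.injOn p)
    simp only [mem_sdiff, not_and, not_not] at hu
    exact hu.2 hu.1
  · obtain ⟨hu, huN⟩ := mem_sdiff.1 hu
    calc _ = (F.filter fun p => u ∈ forbidden ℓ B N f p).card := by
          congr 1
          exact filter_congr fun p _ => by simp [hu, huN]
      _ ≤ load ℓ B N f u := card_filter_mem_forbidden_le_load hF u
      _ ≤ _ := hf.load_le u hu huN

theorem IsPartialSeq_s2.isGoodSeq_piecewise (hB : IsSTS v B) (hf : IsPartialSeq_s2 ℓ v B N f)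
    (hX : F ∪ N = Icc 1 v) (hdisj : Disjoint F N) (hF : WellSpaced ℓ F) (hg_inj : Set.InjOn g F)
    (hg : ∀ p ∈ F, g p ∈ (Icc 1 v \ N.image f) \ forbidden ℓ B N f p) :
    IsGoodSeq v ℓ B (F.piecewise g f) := by
  have hxN : Set.EqOn f (F.piecewise g f) N := fun q hq =>
    (piecewise_eq_of_notMem _ _ _ (disjoint_right.1 hdisj hq)).symm
  refine isGoodSeq_of_tripleFree (fun b hb => (hB.1 b hb).2) ?_ ?_
  · rw [← coe_Icc]
    exact bijOn_piecewise hX hdisj hf.mapsTo hf.injOn (fun p hp => (mem_sdiff.1 (hg p hp)).1) hg_inj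
  · rw [← hX]
    refine (hf.tripleFree.congr hxN).union (fun p hp => ?_) hF
    rw [piecewise_eq_of_mem _ _ _ hp, ← forbidden_congr hxN]
    exact (mem_sdiff.1 (hg p hp)).2

end completion

/-- For every integer `ℓ ≥ 3`, there exists an integer `n` such that every Steiner triple
system of order `v` with `v > n` has an `ℓ`-good sequencing. -/
theorem exists_bound_for_good_sequencing (ℓ : ℕ) (hℓ : 3 ≤ ℓ) :
    ∃ n : ℕ, ∀ v : ℕ, n < v → ∀ B : Finset (Finset ℕ), IsSTS v B →
      ∃ x : ℕ → ℕ, IsGoodSeq v ℓ B x := by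
  refine ⟨2 * ℓ * (144 * ℓ ^ 3 + 12 * ℓ ^ 2 + 4 * ℓ), fun v hv B hB => ?_⟩
  have hℓ₀ : 0 < ℓ := by omega
  set F := (Icc 1 v).filter (2 * ℓ ∣ ·)
  set N := (Icc 1 v).filter fun q => ¬ 2 * ℓ ∣ q
  have hFN : F.card + N.card = v := by
    simpa using card_filter_add_card_filter_not (s := Icc 1 v) (2 * ℓ ∣ ·)
  have hF : F.card = v / (2 * ℓ) := by
    rw [← Nat.Ioc_filter_dvd_card_eq_div, ← Icc_succ_left_eq_Ioc]; rfl
  have hF_ge : 144 * ℓ ^ 3 + 12 * ℓ ^ 2 + 4 * ℓ ≤ F.card := by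
    rw [hF, Nat.le_div_iff_mul_le (by positivity)]; linarith
  have hF_gt : v < 2 * ℓ * (F.card + 1) := hF ▸ Nat.lt_mul_div_succ v (by positivity)
  obtain ⟨f, hf⟩ := exists_isPartialSeq hℓ₀ hB N (by nlinarith)
  obtain ⟨g, hg_inj, hg⟩ :=
    hf.exists_completion (F := F) hB (wellSpaced_filter_dvd ℓ _) hFN.le (by linarith)
  exact ⟨_, hf.isGoodSeq_piecewise hB (filter_union_filter_not_eq _ _)
    (disjoint_filter_filter_not _ _ _) (wellSpaced_filter_dvd ℓ _) hg_inj hg⟩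
end

section
/- If a Steiner triple system of order v with v ≥ 7 has an ℓ-good sequencing (where ℓ ≥ 3), then 3ℓ ≤ v + 2. -/
/-!
Relabel each block by the positions of its points in the sequencing: the relabelled blocks
again form a Steiner triple system on `{1, …, v}`, and goodness says that every block `t`
has `max t - min t ≥ ℓ`. For `ℓ < v < 2ℓ` a short case analysis around the middle position
`ℓ` is contradictory. For `v = 2ℓ + w` with `w + 3 ≤ ℓ`, split the positions into
`L = (0, ℓ]`, `M = (ℓ, ℓ + w]`, `R = (ℓ + w, 2ℓ + w]`. No block has three points in one part,
so counting, block by block, the pairs inside `L`, `M`, `R` against the pairs in `L × R`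
gives `2ℓ(ℓ - 1) + w(w - 1) ≤ ℓ² + 2N`, where `N` counts the blocks missing `L` or missing
`R`. Such a block lies in a window of `ℓ + w` positions and is determined by its extreme
points, so `N ≤ w(w + 1)`, and `ℓ² - 2ℓ ≤ w² + 3w` contradicts `w + 3 ≤ ℓ`.
-/

open Finset

def SpansAtLeast (ℓ : ℕ) (t : Finset ℕ) : Prop :=
  ∃ a ∈ t, ∃ b ∈ t, a + ℓ ≤ b

lemma SpansAtLeast.card_inter_Ioc_le_two {ℓ a b : ℕ} {t : Finset ℕ} (ht : SpansAtLeast ℓ t)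
    (hcard : t.card = 3) (hab : b ≤ a + ℓ) : (t ∩ Ioc a b).card ≤ 2 := by
  by_contra! h
  have hsub : t ⊆ Ioc a b :=
    inter_eq_left.mp (eq_of_subset_of_card_le (inter_subset_left : t ∩ Ioc a b ⊆ t) (by omega))
  obtain ⟨p, hp, q, hq, hpq⟩ := ht
  have := mem_Ioc.mp (hsub hp)
  have := mem_Ioc.mp (hsub hq)
  omega

lemma spansAtLeast_triple {ℓ i j k : ℕ} :
    SpansAtLeast ℓ {i, j, k} ↔ i + ℓ ≤ j ∨ i + ℓ ≤ k ∨ j + ℓ ≤ i ∨ j + ℓ ≤ k ∨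
      k + ℓ ≤ i ∨ k + ℓ ≤ j := by
  simp only [SpansAtLeast, mem_insert, mem_singleton, exists_eq_or_imp, exists_eq_left]
  omega

lemma card_inter_Ioc_add_card_inter_Ioc_add_card_inter_Ioc {a b c d : ℕ} {t : Finset ℕ}
    (hab : a ≤ b) (hbc : b ≤ c) (hcd : c ≤ d) (ht : t ⊆ Ioc a d) :
    (t ∩ Ioc a b).card + (t ∩ Ioc b c).card + (t ∩ Ioc c d).card = t.card := by
  rw [← card_union_of_disjoint ((Ioc_disjoint_Ioc_of_le le_rfl).mono inter_subset_right
      inter_subset_right), ← inter_union_distrib_left, Ioc_union_Ioc_eq_Ioc hab hbc,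
    ← card_union_of_disjoint ((Ioc_disjoint_Ioc_of_le le_rfl).mono inter_subset_right
      inter_subset_right), ← inter_union_distrib_left, Ioc_union_Ioc_eq_Ioc (hab.trans hbc) hcd,
    inter_eq_left.mpr ht]

namespace IsSTS

variable {v ℓ : ℕ} {T : Finset (Finset ℕ)}

lemma eq_of_mem_of_mem (hT : IsSTS v T) {t₁ t₂ : Finset ℕ} (h₁ : t₁ ∈ T) (h₂ : t₂ ∈ T)
    {i j : ℕ} (hij : i ≠ j) (hi₁ : i ∈ t₁) (hj₁ : j ∈ t₁) (hi₂ : i ∈ t₂) (hj₂ : j ∈ t₂) :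
    t₁ = t₂ := by
  obtain ⟨t, -, hu⟩ := hT.2 i ((hT.1 t₁ h₁).1 hi₁) j ((hT.1 t₁ h₁).1 hj₁) hij
  exact (hu t₁ ⟨h₁, hi₁, hj₁⟩).trans (hu t₂ ⟨h₂, hi₂, hj₂⟩).symm

lemma exists_triple_mem {i j : ℕ} (hT : IsSTS v T) (hi : i ∈ Icc 1 v) (hj : j ∈ Icc 1 v)
    (hij : i ≠ j) : ∃ k ∈ Icc 1 v, k ≠ i ∧ k ≠ j ∧ {i, j, k} ∈ T := by
  obtain ⟨t, ⟨ht, hit, hjt⟩, -⟩ := hT.2 i hi j hj hij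
  have hcard : 0 < (t \ {i, j}).card := by
    have := le_card_sdiff {i, j} t
    rw [(hT.1 t ht).2, card_pair hij] at this
    omega
  obtain ⟨k, hk⟩ := card_pos.mp hcard
  simp only [mem_sdiff, mem_insert, mem_singleton, not_or] at hk
  obtain ⟨hkt, hki, hkj⟩ := hk
  have hsub : {i, j, k} ⊆ t := by simp only [insert_subset_iff, singleton_subset_iff, *, and_self]
  have heq : ({i, j, k} : Finset ℕ) = t :=
    eq_of_subset_of_card_le hsub (by rw [(hT.1 t ht).2, card_eq_three.mpr
      ⟨i, j, k, hij, Ne.symm hki, Ne.symm hkj, rfl⟩])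
  exact ⟨k, (hT.1 t ht).1 hkt, hki, hkj, heq ▸ ht⟩

lemma sum_card_filter_mem (hT : IsSTS v T) {P : Finset (ℕ × ℕ)} (hP : P ⊆ (Icc 1 v).offDiag) :
    ∑ t ∈ T, (P.filter (fun p => p.1 ∈ t ∧ p.2 ∈ t)).card = P.card := by
  simp_rw [card_filter]
  rw [sum_comm, card_eq_sum_ones]
  refine sum_congr rfl fun p hp => ?_
  obtain ⟨hp₁, hp₂, hne⟩ := mem_offDiag.mp (hP hp)
  obtain ⟨t, ht, hu⟩ := hT.2 p.1 hp₁ p.2 hp₂ hne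
  rw [← card_filter, card_eq_one]
  refine ⟨t, ext fun s => ?_⟩
  simp only [mem_filter, mem_singleton]
  exact ⟨hu s, by rintro rfl; exact ht⟩

lemma sum_card_offDiag_inter (hT : IsSTS v T) {S : Finset ℕ} (hS : S ⊆ Icc 1 v) :
    ∑ t ∈ T, (t ∩ S).offDiag.card = S.offDiag.card := by
  rw [← hT.sum_card_filter_mem (offDiag_mono hS)]
  refine sum_congr rfl fun t _ => congrArg card ?_
  ext p
  simp only [mem_offDiag, mem_filter, mem_inter]
  tauto

lemma sum_card_inter_mul_card_inter (hT : IsSTS v T) {S S' : Finset ℕ} (hS : S ⊆ Icc 1 v)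
    (hS' : S' ⊆ Icc 1 v) (hd : Disjoint S S') :
    ∑ t ∈ T, (t ∩ S).card * (t ∩ S').card = S.card * S'.card := by
  have hP : S ×ˢ S' ⊆ (Icc 1 v).offDiag := fun p hp => by
    obtain ⟨h₁, h₂⟩ := mem_product.mp hp
    exact mem_offDiag.mpr ⟨hS h₁, hS' h₂, fun h => disjoint_left.mp hd h₁ (h ▸ h₂)⟩
  rw [← card_product, ← hT.sum_card_filter_mem hP]
  refine sum_congr rfl fun t _ => ?_
  rw [← card_product]
  congr 1
  ext p
  simp only [mem_product, mem_filter, mem_inter]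
  tauto

lemma card_filter_subset_Ioc_le (hT : IsSTS v T) (hspan : ∀ t ∈ T, SpansAtLeast ℓ t) (a w : ℕ) :
    (T.filter (· ⊆ Ioc a (a + ℓ + w))).card ≤ (w + 1).choose 2 := by
  have hbounds : ∀ t ∈ T.filter (· ⊆ Ioc a (a + ℓ + w)), ∃ h : t.Nonempty, t ∈ T ∧
      a < t.min' h ∧ t.min' h + ℓ ≤ t.max' h ∧ t.min' h < t.max' h ∧ t.max' h ≤ a + ℓ + w := by
    intro t ht
    obtain ⟨htT, hsub⟩ := mem_filter.mp ht
    obtain ⟨p, hp, q, hq, hpq⟩ := hspan t htT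
    have hne : t.Nonempty := ⟨p, hp⟩
    have hmin := mem_Ioc.mp (hsub (t.min'_mem hne))
    have hmax := mem_Ioc.mp (hsub (t.max'_mem hne))
    have hlt := min'_lt_max'_of_card t (by rw [(hT.1 t htT).2]; norm_num)
    exact ⟨hne, htT, hmin.1, by linarith [t.min'_le p hp, t.le_max' q hq], hlt, hmax.2⟩
  -- A block is determined by its extreme points `min < max`, and `(min, max + 1 - ℓ)` is an
  -- increasing pair in `(a, a + w + 1]`.
  have hcard : (w + 1).choose 2 =
      ((Ioc a (a + (w + 1)) ×ˢ Ioc a (a + (w + 1))).filter (fun p => p.1 < p.2)).card := by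
    rw [card_product_filter_lt, Nat.card_Ioc, Nat.add_sub_cancel_left]
  rw [hcard]
  refine card_le_card_of_injOn
    (fun t => if h : t.Nonempty then (t.min' h, t.max' h + 1 - ℓ) else (0, 0)) ?_ ?_
  · intro t ht
    obtain ⟨hne, -, h₁, h₂, -, h₃⟩ := hbounds t ht
    simp only [dif_pos hne, coe_filter, Set.mem_ofPred_eq, mem_product, mem_Ioc]
    omega
  · intro t₁ ht₁ t₂ ht₂ heq
    obtain ⟨hne₁, hT₁, -, -, hlt₁, -⟩ := hbounds t₁ ht₁
    obtain ⟨hne₂, hT₂, -, h₂, -, -⟩ := hbounds t₂ ht₂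
    simp only [dif_pos hne₁, dif_pos hne₂, Prod.mk.injEq] at heq
    have hmax : t₁.max' hne₁ = t₂.max' hne₂ := by omega
    exact hT.eq_of_mem_of_mem hT₁ hT₂ hlt₁.ne (t₁.min'_mem hne₁) (t₁.max'_mem hne₁)
      (heq.1 ▸ t₂.min'_mem hne₂) (hmax ▸ t₂.max'_mem hne₂)

lemma lt_of_spansAtLeast (hT : IsSTS v T) (hspan : ∀ t ∈ T, SpansAtLeast ℓ t) (hv : 2 ≤ v) :
    ℓ < v := by
  obtain ⟨k, -, -, -, hk⟩ := hT.exists_triple_mem (i := 1) (j := 2)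
    (mem_Icc.mpr ⟨le_rfl, by omega⟩) (mem_Icc.mpr ⟨by omega, hv⟩) (by omega)
  obtain ⟨p, hp, q, hq, hpq⟩ := hspan _ hk
  have := mem_Icc.mp ((hT.1 _ hk).1 hp)
  have := mem_Icc.mp ((hT.1 _ hk).1 hq)
  omega

/-- The pairs `{ℓ - 1, ℓ}` and `{ℓ, ℓ + 1}` force the blocks `{ℓ - 1, ℓ, 2ℓ - 1}` and
`{ℓ, ℓ + 1, 1}`, which leave no admissible third point for `{ℓ - 1, ℓ + 1}`. -/
lemma two_mul_le (hT : IsSTS v T) (hspan : ∀ t ∈ T, SpansAtLeast ℓ t) (hℓ : 3 ≤ ℓ)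
    (hv : 2 ≤ v) : 2 * ℓ ≤ v := by
  have hlt := hT.lt_of_spansAtLeast hspan hv
  by_contra! hv'
  obtain ⟨k₁, hk₁, -, -, hb₁⟩ := hT.exists_triple_mem (i := ℓ - 1) (j := ℓ)
    (mem_Icc.mpr ⟨by omega, by omega⟩) (mem_Icc.mpr ⟨by omega, by omega⟩) (by omega)
  obtain ⟨k₂, hk₂, -, -, hb₂⟩ := hT.exists_triple_mem (i := ℓ) (j := ℓ + 1)
    (mem_Icc.mpr ⟨by omega, by omega⟩) (mem_Icc.mpr ⟨by omega, by omega⟩) (by omega)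
  obtain ⟨k₃, hk₃, -, -, hb₃⟩ := hT.exists_triple_mem (i := ℓ - 1) (j := ℓ + 1)
    (mem_Icc.mpr ⟨by omega, by omega⟩) (mem_Icc.mpr ⟨by omega, by omega⟩) (by omega)
  have hs₁ := spansAtLeast_triple.mp (hspan _ hb₁)
  have hs₂ := spansAtLeast_triple.mp (hspan _ hb₂)
  have hs₃ := spansAtLeast_triple.mp (hspan _ hb₃)
  rw [mem_Icc] at hk₁ hk₂ hk₃
  obtain rfl : k₁ = 2 * ℓ - 1 := by omega
  obtain rfl : k₂ = 1 := by omega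
  obtain rfl | rfl : k₃ = 1 ∨ k₃ = 2 * ℓ - 1 := by omega
  · have h := hT.eq_of_mem_of_mem hb₃ hb₂ (i := ℓ + 1) (j := 1) (by omega) (by simp) (by simp)
      (by simp) (by simp)
    have : ℓ - 1 ∈ ({ℓ, ℓ + 1, 1} : Finset ℕ) := h ▸ by simp
    simp only [mem_insert, mem_singleton] at this
    omega
  · have h := hT.eq_of_mem_of_mem hb₃ hb₁ (i := ℓ - 1) (j := 2 * ℓ - 1) (by omega) (by simp)
      (by simp) (by simp) (by simp)
    have : ℓ + 1 ∈ ({ℓ - 1, ℓ, 2 * ℓ - 1} : Finset ℕ) := h ▸ by simp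
    simp only [mem_insert, mem_singleton] at this
    omega

lemma card_offDiag_inter_parts_le {w : ℕ} (hT : IsSTS (2 * ℓ + w) T)
    (hspan : ∀ t ∈ T, SpansAtLeast ℓ t) (hw : w ≤ ℓ) {t : Finset ℕ} (ht : t ∈ T) :
    (t ∩ Ioc 0 ℓ).offDiag.card + (t ∩ Ioc ℓ (ℓ + w)).offDiag.card +
        (t ∩ Ioc (ℓ + w) (2 * ℓ + w)).offDiag.card ≤
      (t ∩ Ioc 0 ℓ).card * (t ∩ Ioc (ℓ + w) (2 * ℓ + w)).card +
        2 * (if t ⊆ Ioc 0 (0 + ℓ + w) then 1 else 0) +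
        2 * (if t ⊆ Ioc ℓ (ℓ + ℓ + w) then 1 else 0) := by
  set L := Ioc 0 ℓ
  set M := Ioc ℓ (ℓ + w)
  set R := Ioc (ℓ + w) (2 * ℓ + w)
  have hsub : t ⊆ Ioc 0 (2 * ℓ + w) := fun z hz => by
    have := mem_Icc.mp ((hT.1 t ht).1 hz)
    exact mem_Ioc.mpr (by omega)
  have hsplit : (t ∩ L).card + (t ∩ M).card + (t ∩ R).card = 3 :=
    (card_inter_Ioc_add_card_inter_Ioc_add_card_inter_Ioc (Nat.zero_le ℓ)
      (Nat.le_add_right ℓ w) (by omega) hsub).trans (hT.1 t ht).2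
  have hl : (t ∩ L).card ≤ 2 := (hspan t ht).card_inter_Ioc_le_two (hT.1 t ht).2 (by omega)
  have hm : (t ∩ M).card ≤ 2 := (hspan t ht).card_inter_Ioc_le_two (hT.1 t ht).2 (by omega)
  have hr : (t ∩ R).card ≤ 2 := (hspan t ht).card_inter_Ioc_le_two (hT.1 t ht).2 (by omega)
  have hLM : (t ∩ R).card = 0 → 1 ≤ if t ⊆ Ioc 0 (0 + ℓ + w) then 1 else 0 := fun h => by
    refine (if_pos fun z hz => ?_).ge
    have hzR : z ∉ R := fun hzR => notMem_empty z (card_eq_zero.mp h ▸ mem_inter.mpr ⟨hz, hzR⟩)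
    have := mem_Ioc.mp (hsub hz)
    simp only [R, mem_Ioc, not_and, not_le] at hzR
    exact mem_Ioc.mpr ⟨this.1, by omega⟩
  have hMR : (t ∩ L).card = 0 → 1 ≤ if t ⊆ Ioc ℓ (ℓ + ℓ + w) then 1 else 0 := fun h => by
    refine (if_pos fun z hz => ?_).ge
    have hzL : z ∉ L := fun hzL => notMem_empty z (card_eq_zero.mp h ▸ mem_inter.mpr ⟨hz, hzL⟩)
    have := mem_Ioc.mp (hsub hz)
    simp only [L, mem_Ioc, not_and, not_le] at hzL
    exact mem_Ioc.mpr ⟨by omega, by omega⟩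
  simp only [offDiag_card]
  interval_cases (t ∩ L).card <;> interval_cases (t ∩ M).card <;>
    interval_cases (t ∩ R).card <;> omega

lemma three_mul_le_add_two_of_two_mul_le (hT : IsSTS v T) (hspan : ∀ t ∈ T, SpansAtLeast ℓ t)
    (hv : 2 * ℓ ≤ v) : 3 * ℓ ≤ v + 2 := by
  by_contra! hcon
  obtain ⟨w, rfl⟩ : ∃ w, v = 2 * ℓ + w := ⟨v - 2 * ℓ, by omega⟩
  set L := Ioc 0 ℓ
  set M := Ioc ℓ (ℓ + w)
  set R := Ioc (ℓ + w) (2 * ℓ + w)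
  have hIcc : Icc 1 (2 * ℓ + w) = Ioc 0 (2 * ℓ + w) := by ext z; simp only [mem_Icc, mem_Ioc]; omega
  have hL : L ⊆ Icc 1 (2 * ℓ + w) := hIcc ▸ Ioc_subset_Ioc_right (by omega)
  have hM : M ⊆ Icc 1 (2 * ℓ + w) := hIcc ▸ Ioc_subset_Ioc (by omega) (by omega)
  have hR : R ⊆ Icc 1 (2 * ℓ + w) := hIcc ▸ Ioc_subset_Ioc_left (by omega)
  have hsum := sum_le_sum fun t (ht : t ∈ T) =>
    hT.card_offDiag_inter_parts_le hspan (by omega) ht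
  simp only [sum_add_distrib, ← mul_sum, ← card_filter] at hsum
  rw [hT.sum_card_offDiag_inter hL, hT.sum_card_offDiag_inter hM, hT.sum_card_offDiag_inter hR,
    hT.sum_card_inter_mul_card_inter hL hR (Ioc_disjoint_Ioc_of_le (by omega))] at hsum
  have hstair₁ := hT.card_filter_subset_Ioc_le hspan 0 w
  have hstair₂ := hT.card_filter_subset_Ioc_le hspan ℓ w
  have hchoose : 2 * (w + 1).choose 2 = (w + 1) * w := by
    simpa [mul_comm] using (Nat.add_one_mul_choose_eq w 1).symm
  have hcL : L.card = ℓ := by simp [L]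
  have hcM : M.card = w := by simp [M]
  have hcR : R.card = ℓ := by simp only [R, Nat.card_Ioc]; omega
  rw [offDiag_card, offDiag_card, offDiag_card, hcL, hcM, hcR] at hsum
  zify [Nat.le_mul_self ℓ, Nat.le_mul_self w] at hsum hcon hstair₁ hstair₂ hchoose
  nlinarith

end IsSTS

def blockPositions (v : ℕ) (x : ℕ → ℕ) (b : Finset ℕ) : Finset ℕ :=
  (Icc 1 v).filter (fun i => x i ∈ b)

section Sequencing

variable {v ℓ : ℕ} {x : ℕ → ℕ} {B : Finset (Finset ℕ)}

lemma mem_blockPositions {b : Finset ℕ} {i : ℕ} :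
    i ∈ blockPositions v x b ↔ i ∈ Set.Icc 1 v ∧ x i ∈ b := by
  simp [blockPositions]

lemma exists_mem_blockPositions (hx : Set.BijOn x (Set.Icc 1 v) (Set.Icc 1 v)) {b : Finset ℕ}
    (hb : b ⊆ Icc 1 v) {z : ℕ} (hz : z ∈ b) : ∃ i ∈ blockPositions v x b, x i = z := by
  obtain ⟨i, hi, rfl⟩ := hx.surjOn (by simpa using hb hz)
  exact ⟨i, mem_blockPositions.mpr ⟨hi, hz⟩, rfl⟩

lemma card_blockPositions (hx : Set.BijOn x (Set.Icc 1 v) (Set.Icc 1 v)) {b : Finset ℕ}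
    (hb : b ⊆ Icc 1 v) : (blockPositions v x b).card = b.card :=
  card_nbij x (fun _ hi => (mem_blockPositions.mp hi).2)
    (hx.injOn.mono fun _ hi => (mem_blockPositions.mp hi).1)
    (fun _ hz => exists_mem_blockPositions hx hb hz)

lemma IsSTS.image_blockPositions (hB : IsSTS v B)
    (hx : Set.BijOn x (Set.Icc 1 v) (Set.Icc 1 v)) : IsSTS v (B.image (blockPositions v x)) := by
  refine ⟨?_, fun i hi j hj hij => ?_⟩
  · simp only [mem_image, forall_exists_index, and_imp, forall_apply_eq_imp_iff₂]
    exact fun b hb =>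
      ⟨filter_subset _ _, (card_blockPositions hx (hB.1 b hb).1).trans (hB.1 b hb).2⟩
  · have hi' : i ∈ Set.Icc 1 v := by simpa using hi
    have hj' : j ∈ Set.Icc 1 v := by simpa using hj
    obtain ⟨b, ⟨hb, hib, hjb⟩, hu⟩ := hB.2 (x i) (by simpa using hx.mapsTo hi')
      (x j) (by simpa using hx.mapsTo hj') (hx.injOn.ne hi' hj' hij)
    refine ⟨blockPositions v x b, ⟨mem_image_of_mem _ hb, mem_blockPositions.mpr ⟨hi', hib⟩,
      mem_blockPositions.mpr ⟨hj', hjb⟩⟩, ?_⟩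
    rintro _ ⟨ht, hit, hjt⟩
    obtain ⟨b', hb', rfl⟩ := mem_image.mp ht
    rw [hu b' ⟨hb', (mem_blockPositions.mp hit).2, (mem_blockPositions.mp hjt).2⟩]

lemma IsGoodSeq.spansAtLeast (hx : IsGoodSeq v ℓ B x) (hB : IsSTS v B) :
    ∀ t ∈ B.image (blockPositions v x), SpansAtLeast ℓ t := by
  simp only [mem_image, forall_exists_index, and_imp, forall_apply_eq_imp_iff₂]
  intro b hb
  unfold SpansAtLeast
  by_contra! hshort
  have hne : (blockPositions v x b).Nonempty := by
    rw [← card_pos, card_blockPositions hx.1 (hB.1 b hb).1, (hB.1 b hb).2]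
    norm_num
  set p := (blockPositions v x b).min' hne
  refine hx.2 p (mem_blockPositions.mp ((blockPositions v x b).min'_mem hne)).1.1 b hb ?_
  intro z hz
  obtain ⟨i, hi, rfl⟩ := exists_mem_blockPositions hx.1 (hB.1 b hb).1 hz
  have := hshort p ((blockPositions v x b).min'_mem hne) i hi
  exact ⟨i, ⟨⟨(blockPositions v x b).min'_le i hi, by omega⟩, (mem_blockPositions.mp hi).1⟩, rfl⟩

end Sequencing

/-- If a Steiner triple system of order `v ≥ 7` has an `ℓ`-good sequencing (`ℓ ≥ 3`),
then `3ℓ ≤ v + 2`. -/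
theorem good_sequencing_bound
    (v ℓ : ℕ) (hℓ : 3 ≤ ℓ) (hv : 7 ≤ v) (B : Finset (Finset ℕ)) (hSTS : IsSTS v B)
    (x : ℕ → ℕ) (hx : IsGoodSeq v ℓ B x) :
    3 * ℓ ≤ v + 2 := by
  have hT := hSTS.image_blockPositions hx.1
  have hspan := hx.spansAtLeast hSTS
  exact hT.three_mul_le_add_two_of_two_mul_le hspan (hT.two_mul_le hspan hℓ (by omega))
end

section
/- If ℓ > 3 is an odd integer, then no Steiner triple system of order 3ℓ − 2 has an ℓ-good sequencing. -/
open Finset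

def farWeight (ℓ p q : ℕ) : ℤ := if p + ℓ ≤ q ∨ q + ℓ ≤ p then -4 else 2

def pairWeight (ℓ p q : ℕ) : ℤ := if (p ≤ ℓ + 1 ↔ q ≤ ℓ + 1) then farWeight ℓ p q else -1

lemma pairWeight_comm (ℓ p q : ℕ) : pairWeight ℓ p q = pairWeight ℓ q p := by
  unfold pairWeight farWeight
  split_ifs <;> first | rfl | omega

lemma pairWeight_add_add_nonpos {ℓ p q r : ℕ} (h : ℓ + min p (min q r) ≤ max p (max q r)) :
    pairWeight ℓ p q + pairWeight ℓ q r + pairWeight ℓ p r ≤ 0 := by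
  unfold pairWeight farWeight
  split_ifs <;> omega

lemma card_filter_far_offDiag_Icc {ℓ : ℕ} (hℓ : 1 ≤ ℓ) (a b : ℕ) :
    #{z ∈ (Icc a b).offDiag | z.1 + ℓ ≤ z.2 ∨ z.2 + ℓ ≤ z.1} = #(Icc a (b + 1 - ℓ)).offDiag := by
  apply card_nbij' (fun z => if z.1 < z.2 then (z.1, z.2 + 1 - ℓ) else (z.1 + 1 - ℓ, z.2))
    (fun z => if z.1 < z.2 then (z.1, z.2 + ℓ - 1) else (z.1 + ℓ - 1, z.2))
  all_goals
    rintro ⟨p, q⟩ hz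
    simp only [coe_filter, mem_offDiag, mem_Icc, Set.mem_ofPred_eq, mem_coe] at hz ⊢
    split_ifs <;>
      simp_all only [ne_eq, not_lt, tsub_le_iff_right, Prod.ext_iff, true_and, and_true] <;>
      omega

lemma card_offDiag_Icc (a b : ℕ) :
    (#(Icc a b).offDiag : ℤ) = ((b + 1 - a : ℕ) : ℤ) * ((b + 1 - a : ℕ) - 1) := by
  rw [offDiag_card, Nat.card_Icc, Nat.cast_sub (Nat.le_mul_self _)]
  push_cast
  ring

lemma sum_farWeight_offDiag_Icc {ℓ : ℕ} (hℓ : 1 ≤ ℓ) (a b : ℕ) :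
    ∑ z ∈ (Icc a b).offDiag, farWeight ℓ z.1 z.2
      = 2 * #(Icc a b).offDiag - 6 * #(Icc a (b + 1 - ℓ)).offDiag := by
  have h : ∀ p q, farWeight ℓ p q = 2 - 6 * if p + ℓ ≤ q ∨ q + ℓ ≤ p then 1 else 0 := by
    intro p q
    unfold farWeight
    split_ifs <;> norm_num
  simp only [h, sum_sub_distrib, sum_const, ← mul_sum, sum_boole, nsmul_eq_mul,
    card_filter_far_offDiag_Icc hℓ]
  ring

lemma sum_pairWeight_offDiag_of_iff {ℓ : ℕ} {s : Finset ℕ}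
    (hs : ∀ p ∈ s, ∀ q ∈ s, (p ≤ ℓ + 1 ↔ q ≤ ℓ + 1)) :
    ∑ z ∈ s.offDiag, pairWeight ℓ z.1 z.2 = ∑ z ∈ s.offDiag, farWeight ℓ z.1 z.2 :=
  sum_congr rfl fun _ hz => if_pos (hs _ (mem_offDiag.1 hz).1 _ (mem_offDiag.1 hz).2.1)

lemma sum_pairWeight_product {ℓ : ℕ} {L R : Finset ℕ} (hL : ∀ p ∈ L, p ≤ ℓ + 1)
    (hR : ∀ q ∈ R, ℓ + 1 < q) : ∑ z ∈ L ×ˢ R, pairWeight ℓ z.1 z.2 = -(#L * #R) := by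
  have hcross : ∀ z ∈ L ×ˢ R, pairWeight ℓ z.1 z.2 = -1 := fun z hz =>
    if_neg fun h => (hR _ (mem_product.1 hz).2).not_ge (h.1 (hL _ (mem_product.1 hz).1))
  simp [sum_congr rfl hcross, card_product]

lemma sum_pairWeight_offDiag {ℓ : ℕ} (hℓ : 3 < ℓ) :
    ∑ z ∈ (Icc 1 (3 * ℓ - 2)).offDiag, pairWeight ℓ z.1 z.2 = 6 * ℓ - 18 := by
  set L := Icc 1 (ℓ + 1)
  set R := Icc (ℓ + 2) (3 * ℓ - 2)
  have hL : ∀ p ∈ L, p ≤ ℓ + 1 := fun p hp => (mem_Icc.1 hp).2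
  have hR : ∀ q ∈ R, ℓ + 1 < q := fun q hq => (mem_Icc.1 hq).1
  have hLR : Disjoint L R := disjoint_left.2 fun p hpL hpR => (hR p hpR).not_ge (hL p hpL)
  have hunion : Icc 1 (3 * ℓ - 2) = L ∪ R := by
    ext p
    simp only [L, R, mem_union, mem_Icc]
    omega
  have hLL := sum_pairWeight_offDiag_of_iff fun p hp q hq => iff_of_true (hL p hp) (hL q hq)
  have hRR := sum_pairWeight_offDiag_of_iff fun p hp q hq =>
    iff_of_false (hR p hp).not_ge (hR q hq).not_ge
  have hRL : ∑ z ∈ R ×ˢ L, pairWeight ℓ z.1 z.2 = -(#L * #R) := by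
    rw [← sum_pairWeight_product hL hR, ← image_swap_product, sum_image (by simp)]
    simp [pairWeight_comm]
  rw [hunion, offDiag_union hLR, sum_union, sum_union, sum_union, hLL, hRR,
    sum_pairWeight_product hL hR, hRL, sum_farWeight_offDiag_Icc (by omega),
    sum_farWeight_offDiag_Icc (by omega), card_offDiag_Icc, card_offDiag_Icc, card_offDiag_Icc,
    card_offDiag_Icc, Nat.card_Icc, Nat.card_Icc]
  · have hLcard : ((ℓ + 1 + 1 - 1 : ℕ) : ℤ) = ℓ + 1 := by omega
    have hLfar : ((ℓ + 1 + 1 - ℓ + 1 - 1 : ℕ) : ℤ) = 2 := by omega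
    have hRcard : ((3 * ℓ - 2 + 1 - (ℓ + 2) : ℕ) : ℤ) = 2 * ℓ - 3 := by omega
    have hRfar : ((3 * ℓ - 2 + 1 - ℓ + 1 - (ℓ + 2) : ℕ) : ℤ) = ℓ - 2 := by omega
    rw [hLcard, hLfar, hRcard, hRfar]
    ring
  all_goals
    simp only [disjoint_left, mem_union, mem_offDiag, mem_product, L, R, mem_Icc]
    omega

section DoubleCounting

variable {α β M : Type*} [AddCommMonoid M]

lemma sum_offDiag_eq_sum_sum_offDiag [DecidableEq α] {s : Finset α} {B : Finset (Finset α)}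
    (hB : ∀ b ∈ B, b ⊆ s) (hpair : ∀ p ∈ s, ∀ q ∈ s, p ≠ q → ∃! b, b ∈ B ∧ p ∈ b ∧ q ∈ b)
    (f : α × α → M) : ∑ z ∈ s.offDiag, f z = ∑ b ∈ B, ∑ z ∈ b.offDiag, f z := by
  have hcover : s.offDiag = B.biUnion offDiag := by
    ext ⟨p, q⟩
    simp only [mem_offDiag, mem_biUnion]
    constructor
    · rintro ⟨hp, hq, hpq⟩
      obtain ⟨b, ⟨hb, hpb, hqb⟩, -⟩ := hpair p hp q hq hpq
      exact ⟨b, hb, hpb, hqb, hpq⟩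
    · rintro ⟨b, hb, hpb, hqb, hpq⟩
      exact ⟨hB b hb hpb, hB b hb hqb, hpq⟩
  rw [hcover, sum_biUnion]
  intro b hb b' hb' hne
  simp only [Function.onFun, disjoint_left, mem_offDiag]
  rintro ⟨p, q⟩ ⟨hpb, hqb, hpq⟩ ⟨hpb', hqb', -⟩
  exact hne ((hpair p (hB b hb hpb) q (hB b hb hqb) hpq).unique ⟨hb, hpb, hqb⟩ ⟨hb', hpb', hqb'⟩)

lemma sum_offDiag_image [DecidableEq β] {s : Finset α} {g : α → β} (hg : Set.InjOn g s)
    (f : β → β → M) :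
    ∑ z ∈ (s.image g).offDiag, f z.1 z.2 = ∑ z ∈ s.offDiag, f (g z.1) (g z.2) := by
  refine (sum_nbij (Prod.map g g) ?_ ?_ ?_ fun _ _ => rfl).symm
  · rintro ⟨p, q⟩ hz
    simp only [mem_offDiag] at hz ⊢
    exact ⟨mem_image_of_mem g hz.1, mem_image_of_mem g hz.2.1,
      fun h => hz.2.2 (hg hz.1 hz.2.1 h)⟩
  · rintro ⟨p, q⟩ hz ⟨p', q'⟩ hz' h
    simp only [coe_offDiag, Set.mem_offDiag, mem_coe, Prod.map, Prod.mk.injEq] at hz hz' h ⊢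
    exact ⟨hg hz.1 hz'.1 h.1, hg hz.2.1 hz'.2.1 h.2⟩
  · rintro ⟨u, w⟩ hz
    simp only [coe_offDiag, Set.mem_offDiag, mem_coe, mem_image] at hz
    obtain ⟨⟨p, hp, rfl⟩, ⟨q, hq, rfl⟩, hne⟩ := hz
    exact ⟨(p, q), by simpa using ⟨hp, hq, fun h => hne (h ▸ rfl)⟩, rfl⟩

end DoubleCounting

lemma IsGoodSeq.exists_add_le {v ℓ : ℕ} {B : Finset (Finset ℕ)} {x : ℕ → ℕ}
    (hx : IsGoodSeq v ℓ B x) {b t : Finset ℕ} (hb : b ∈ B) (ht : t ⊆ Icc 1 v)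
    (hbt : (b : Set ℕ) ⊆ x '' t) : ∃ p ∈ t, ∃ q ∈ t, p + ℓ ≤ q := by
  by_contra! hnear
  obtain rfl | hne := t.eq_empty_or_nonempty
  · exact hx.2 1 le_rfl b hb (hbt.trans (by simp))
  have hmin := mem_Icc.1 (ht (min'_mem t hne))
  refine hx.2 (t.min' hne) hmin.1 b hb (hbt.trans (Set.image_mono fun p hp => ?_))
  have hpI := mem_Icc.1 (ht hp)
  have := min'_le t p hp
  have := hnear _ (min'_mem t hne) p hp
  exact ⟨Set.mem_Icc.2 ⟨by omega, by omega⟩, Set.mem_Icc.2 hpI⟩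

lemma sum_offDiag_pairWeight_nonpos {ℓ : ℕ} {t : Finset ℕ} (ht : #t = 3)
    (hfar : ∃ p ∈ t, ∃ q ∈ t, p + ℓ ≤ q) : ∑ z ∈ t.offDiag, pairWeight ℓ z.1 z.2 ≤ 0 := by
  obtain ⟨a, b, c, hab, hac, hbc, rfl⟩ := card_eq_three.1 ht
  have hspread : ℓ + min a (min b c) ≤ max a (max b c) := by
    simp only [mem_insert, mem_singleton] at hfar
    obtain ⟨p, hp, q, hq, hpq⟩ := hfar
    rcases hp with rfl | rfl | rfl <;> rcases hq with rfl | rfl | rfl <;> omega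
  have hsum := sum_union (disjoint_diag_offDiag ({a, b, c} : Finset ℕ))
    (f := fun z => pairWeight ℓ z.1 z.2)
  rw [diag_union_offDiag, sum_diag, sum_product] at hsum
  simp only [mem_insert, mem_singleton, hab, hac, hbc, or_self, not_false_eq_true, sum_insert,
    sum_singleton] at hsum
  linarith [pairWeight_add_add_nonpos hspread, pairWeight_comm ℓ a b, pairWeight_comm ℓ a c,
    pairWeight_comm ℓ b c]

theorem no_good_sequencing_of_sts_three_ell_sub_two_general
    (ℓ : ℕ) (hℓ : 3 < ℓ) (B : Finset (Finset ℕ))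
    (hSTS : IsSTS (3 * ℓ - 2) B) :
    ¬ ∃ x : ℕ → ℕ, IsGoodSeq (3 * ℓ - 2) ℓ B x := by
  rintro ⟨x, hx⟩
  obtain ⟨hB, hpair⟩ := hSTS
  set I := Icc 1 (3 * ℓ - 2)
  have hxI : Set.BijOn x I I := by simpa only [I, coe_Icc] using hx.1
  set y := Function.invFunOn x I
  have hinv : Set.InvOn y x I I := hxI.invOn_invFunOn
  have hyI : Set.BijOn y I I := hxI.symm hinv.symm
  have hblock : ∀ b ∈ B, ∑ z ∈ (b.image y).offDiag, pairWeight ℓ z.1 z.2 ≤ 0 := by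
    intro b hb
    obtain ⟨hbI, hcard⟩ := hB b hb
    refine sum_offDiag_pairWeight_nonpos ?_ (hx.exists_add_le hb ?_ fun u hu => ?_)
    · rwa [card_image_of_injOn (hyI.injOn.mono hbI)]
    · exact image_subset_iff.2 fun u hu => hyI.mapsTo (hbI hu)
    · exact ⟨y u, mem_image_of_mem y hu, hinv.2 (hbI hu)⟩
  have hyimage : I.image y = I := coe_injective (by rw [coe_image, hyI.image_eq])
  have hnonpos : ∑ z ∈ I.offDiag, pairWeight ℓ z.1 z.2 ≤ 0 := by
    rw [← hyimage, sum_offDiag_image hyI.injOn,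
      sum_offDiag_eq_sum_sum_offDiag (fun b hb => (hB b hb).1) hpair]
    exact sum_nonpos fun b hb => by
      rw [← sum_offDiag_image (hyI.injOn.mono (hB b hb).1)]
      exact hblock b hb
  have hpos : (0 : ℤ) < 6 * ℓ - 18 := by omega
  exact hpos.not_ge (sum_pairWeight_offDiag hℓ ▸ hnonpos)

/-- If `ℓ > 3` is an odd integer, then no Steiner triple system of order `3ℓ − 2` has an
`ℓ`-good sequencing. -/
theorem no_good_sequencing_of_sts_three_ell_sub_two
    (ℓ : ℕ) (hodd : Odd ℓ) (hℓ : 3 < ℓ) (B : Finset (Finset ℕ))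
    (hSTS : IsSTS (3 * ℓ - 2) B) :
    ¬ ∃ x : ℕ → ℕ, IsGoodSeq (3 * ℓ - 2) ℓ B x :=
  no_good_sequencing_of_sts_three_ell_sub_two_general ℓ hℓ B hSTS
end

section
/- Let (X, B) be a Steiner triple system of order v on the point set {1, 2, …, v} such that the identity permutation [1 2 … v] is an ℓ-good sequencing, where ℓ ≥ 3 and v ≥ 7. Then the number of blocks B with B ∩ {1, …, ℓ} = ∅ is at most (v−2ℓ)(v−2ℓ+1)/2. -/
/-!
A block disjoint from `{1, …, ℓ}` has smallest point `a > ℓ`, and since it does not fit into the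
window `a, …, a + ℓ - 1` its largest point is `c ≥ a + ℓ`. Two points determine a block, so the
block is determined by `(a, c)`, i.e. by the 2-multiset `{a, c - ℓ}` of `{ℓ + 1, …, v - ℓ}`;
there are `(v - 2ℓ)(v - 2ℓ + 1)/2` of those.
-/

open Finset

theorem IsSTS.eq_of_mem_of_mem_s11 {v : ℕ} {B : Finset (Finset ℕ)} (hB : IsSTS v B)
    {b b' : Finset ℕ} (hb : b ∈ B) (hb' : b' ∈ B) {p q : ℕ} (hpq : p ≠ q)
    (hp : p ∈ b) (hq : q ∈ b) (hp' : p ∈ b') (hq' : q ∈ b') : b = b' := by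
  obtain ⟨_, -, huniq⟩ := hB.2 p ((hB.1 b hb).1 hp) q ((hB.1 b hb).1 hq) hpq
  exact (huniq b ⟨hb, hp, hq⟩).trans (huniq b' ⟨hb', hp', hq'⟩).symm

theorem IsSTS.card_le_card_of_forall_exists_pair {v : ℕ} {B S : Finset (Finset ℕ)}
    (hB : IsSTS v B) (hSB : S ⊆ B) {T : Finset (ℕ × ℕ)}
    (hT : ∀ b ∈ S, ∃ p ∈ T, p.1 ≠ p.2 ∧ p.1 ∈ b ∧ p.2 ∈ b) : #S ≤ #T :=
  card_le_card_of_forall_subsingleton (fun b p => p.1 ≠ p.2 ∧ p.1 ∈ b ∧ p.2 ∈ b) hT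
    fun _ _ _ ⟨hb, hpq, hp, hq⟩ _ ⟨hb', _, hp', hq'⟩ =>
      hB.eq_of_mem_of_mem_s11 (hSB hb) (hSB hb') hpq hp hq hp' hq'

theorem IsGoodSeq.min'_add_le_max' {v ℓ : ℕ} {B : Finset (Finset ℕ)} (hid : IsGoodSeq v ℓ B id)
    {b : Finset ℕ} (hb : b ∈ B) (hbv : b ⊆ Icc 1 v) (hne : b.Nonempty) :
    b.min' hne + ℓ ≤ b.max' hne := by
  by_contra! hgap
  refine hid.2 (b.min' hne) (mem_Icc.mp (hbv (b.min'_mem hne))).1 b hb ?_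
  rw [Set.image_id]
  intro x hx
  have hxv := mem_Icc.mp (hbv hx)
  have hmin := b.min'_le x hx
  have hmax := b.le_max' x hx
  simp only [Set.mem_inter_iff, Set.mem_Icc]
  omega

/-- The pairs `(a, c)` with `ℓ < a` and `a + ℓ ≤ c ≤ v`, parametrised by the 2-multisets
`{a, c - ℓ}` of `{ℓ + 1, …, v - ℓ}`. -/
def gapPairs (v ℓ : ℕ) : Finset (ℕ × ℕ) :=
  (Icc (ℓ + 1) (v - ℓ)).sym2.image fun z => (z.inf, z.sup + ℓ)

theorem mk_mem_gapPairs {v ℓ a c : ℕ} (ha : ℓ < a) (hac : a + ℓ ≤ c) (hc : c ≤ v) :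
    (a, c) ∈ gapPairs v ℓ := by
  refine mem_image.mpr ⟨s(a, c - ℓ), mk_mem_sym2_iff.mpr ⟨?_, ?_⟩, ?_⟩
  · rw [mem_Icc]; omega
  · rw [mem_Icc]; omega
  · simp only [Sym2.inf_mk, Sym2.sup_mk, Prod.mk.injEq]
    omega

theorem card_gapPairs_le (v ℓ : ℕ) : #(gapPairs v ℓ) ≤ (v - 2 * ℓ) * (v - 2 * ℓ + 1) / 2 :=
  calc #(gapPairs v ℓ) ≤ #(Icc (ℓ + 1) (v - ℓ)).sym2 := card_image_le
    _ = (v - 2 * ℓ) * (v - 2 * ℓ + 1) / 2 := by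
      have hcard : v - ℓ + 1 - (ℓ + 1) = v - 2 * ℓ := by omega
      rw [card_sym2, Nat.card_Icc, hcard, Nat.choose_two_right, Nat.add_sub_cancel, mul_comm]

theorem type_zero_block_count_upper_bound_general
    (v ℓ : ℕ) (B : Finset (Finset ℕ)) (hSTS : IsSTS v B)
    (hid : IsGoodSeq v ℓ B id) :
    (B.filter (fun b => b ∩ Finset.Icc 1 ℓ = ∅)).card
      ≤ (v - 2 * ℓ) * (v - 2 * ℓ + 1) / 2 := by
  refine (hSTS.card_le_card_of_forall_exists_pair (filter_subset _ _) fun b hb => ?_).trans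
    (card_gapPairs_le v ℓ)
  obtain ⟨hbB, hdisj⟩ := mem_filter.mp hb
  obtain ⟨hbv, hcard⟩ := hSTS.1 b hbB
  have hne : b.Nonempty := card_pos.mp (by omega)
  have hmin : ℓ < b.min' hne := by
    by_contra! hle
    have hmem : b.min' hne ∈ b ∩ Icc 1 ℓ :=
      mem_inter.mpr ⟨b.min'_mem hne, mem_Icc.mpr ⟨(mem_Icc.mp (hbv (b.min'_mem hne))).1, hle⟩⟩
    simp [hdisj] at hmem
  have hmax : b.max' hne ≤ v := (mem_Icc.mp (hbv (b.max'_mem hne))).2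
  exact ⟨_, mk_mem_gapPairs hmin (hid.min'_add_le_max' hbB hbv hne) hmax,
    (min'_lt_max'_of_card b (by omega)).ne, b.min'_mem hne, b.max'_mem hne⟩

/-- If the identity permutation is an `ℓ`-good sequencing of an STS(v) with `ℓ ≥ 3`, `v ≥ 7`,
then the number of blocks disjoint from `{1, …, ℓ}` is at most `(v−2ℓ)(v−2ℓ+1)/2`. -/
theorem type_zero_block_count_upper_bound
    (v ℓ : ℕ) (hℓ : 3 ≤ ℓ) (hv : 7 ≤ v) (B : Finset (Finset ℕ)) (hSTS : IsSTS v B)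
    (hid : IsGoodSeq v ℓ B id) :
    (B.filter (fun b => b ∩ Finset.Icc 1 ℓ = ∅)).card
      ≤ (v - 2 * ℓ) * (v - 2 * ℓ + 1) / 2 :=
  type_zero_block_count_upper_bound_general v ℓ B hSTS hid
end

section
/- Let (X, B) be a Steiner triple system of order v on the point set {1, 2, …, v} such that the identity permutation [1 2 … v] is an ℓ-good sequencing, where ℓ ≥ 3. If B ∈ B is a block containing the point ℓ+1 with |B ∩ {1, …, ℓ}| = 2, then 1 ∈ B; consequently, the point ℓ+1 lies in at most one block B with |B ∩ {1, …, ℓ}| = 2. -/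
/-!
The window of positions `2, …, ℓ + 1` has length `ℓ`. A block through `ℓ + 1` meeting
`{1, …, ℓ}` in two points has no further point, so if it avoided `1` it would lie in that
window, contradicting goodness of the identity sequencing. Hence every such block contains the
pair `{1, ℓ + 1}`, and the Steiner property leaves room for at most one of them.
-/

theorem Finset.eq_insert_inter_of_card_eq_succ {α : Type*} [DecidableEq α] {b s : Finset α}
    {a : α} (hcard : b.card = (b ∩ s).card + 1) (ha : a ∈ b) (has : a ∉ s) :
    b = insert a (b ∩ s) := by
  have hsub : insert a (b ∩ s) ⊆ b := Finset.insert_subset ha Finset.inter_subset_left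
  refine (Finset.eq_of_subset_of_card_le hsub ?_).symm
  rw [Finset.card_insert_of_notMem (fun h => has (Finset.mem_inter.1 h).2), hcard]

theorem subset_Icc_two_succ_of_type_two {b : Finset ℕ} {ℓ : ℕ} (hcard : b.card = 3)
    (hmem : ℓ + 1 ∈ b) (htype : (b ∩ Finset.Icc 1 ℓ).card = 2) (h1 : 1 ∉ b) :
    b ⊆ Finset.Icc 2 (ℓ + 1) := by
  have hb : b = insert (ℓ + 1) (b ∩ Finset.Icc 1 ℓ) :=
    Finset.eq_insert_inter_of_card_eq_succ (by omega) hmem (by simp)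
  intro x hx
  have hx1 : x ≠ 1 := by rintro rfl; exact h1 hx
  rw [hb, Finset.mem_insert, Finset.mem_inter, Finset.mem_Icc] at hx
  rw [Finset.mem_Icc]
  omega

theorem IsSTS.eq_of_mem_of_mem_s15 {v : ℕ} {B : Finset (Finset ℕ)} (hSTS : IsSTS v B)
    {b₁ b₂ : Finset ℕ} (hb₁ : b₁ ∈ B) (hb₂ : b₂ ∈ B) {p q : ℕ} (hpq : p ≠ q)
    (hp₁ : p ∈ b₁) (hq₁ : q ∈ b₁) (hp₂ : p ∈ b₂) (hq₂ : q ∈ b₂) : b₁ = b₂ :=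
  (hSTS.2 p ((hSTS.1 b₁ hb₁).1 hp₁) q ((hSTS.1 b₁ hb₁).1 hq₁) hpq).unique
    ⟨hb₁, hp₁, hq₁⟩ ⟨hb₂, hp₂, hq₂⟩

theorem IsGoodSeq.not_subset_Icc_of_id {v ℓ : ℕ} {B : Finset (Finset ℕ)}
    (hid : IsGoodSeq v ℓ B id) {i : ℕ} (hi : 1 ≤ i) {b : Finset ℕ} (hb : b ∈ B)
    (hbv : b ⊆ Finset.Icc 1 v) : ¬ b ⊆ Finset.Icc i (i + ℓ - 1) := by
  intro hwin
  refine hid.2 i hi b hb fun x hx => ⟨x, ⟨?_, ?_⟩, rfl⟩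
  · exact_mod_cast Finset.mem_Icc.1 (hwin hx)
  · exact_mod_cast Finset.mem_Icc.1 (hbv hx)

theorem point_succ_ell_in_at_most_one_type_two_block_general
    (v ℓ : ℕ) (B : Finset (Finset ℕ)) (hSTS : IsSTS v B)
    (hid : IsGoodSeq v ℓ B id) :
    (∀ b ∈ B, ℓ + 1 ∈ b → (b ∩ Finset.Icc 1 ℓ).card = 2 → 1 ∈ b) ∧
    (B.filter (fun b => ℓ + 1 ∈ b ∧ (b ∩ Finset.Icc 1 ℓ).card = 2)).card ≤ 1 := by
  have hone : ∀ b ∈ B, ℓ + 1 ∈ b → (b ∩ Finset.Icc 1 ℓ).card = 2 → 1 ∈ b := by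
    intro b hb hmem htype
    by_contra h1
    refine hid.not_subset_Icc_of_id one_le_two hb (hSTS.1 b hb).1 ?_
    rw [show 2 + ℓ - 1 = ℓ + 1 by omega]
    exact subset_Icc_two_succ_of_type_two (hSTS.1 b hb).2 hmem htype h1
  refine ⟨hone, Finset.card_le_one.2 fun b₁ hb₁ b₂ hb₂ => ?_⟩
  obtain ⟨hb₁B, hm₁, ht₁⟩ := Finset.mem_filter.1 hb₁
  obtain ⟨hb₂B, hm₂, ht₂⟩ := Finset.mem_filter.1 hb₂
  have hℓ : ℓ ≠ 0 := by rintro rfl; simp at ht₁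
  exact hSTS.eq_of_mem_of_mem_s15 hb₁B hb₂B (by omega : 1 ≠ ℓ + 1)
    (hone b₁ hb₁B hm₁ ht₁) hm₁ (hone b₂ hb₂B hm₂ ht₂) hm₂

/-- If the identity permutation is an `ℓ`-good sequencing of an STS(v) with `ℓ ≥ 3`, then any
block containing the point `ℓ+1` and meeting `{1, …, ℓ}` in exactly two points contains the
point `1`; consequently, the point `ℓ+1` lies in at most one such block. -/
theorem point_succ_ell_in_at_most_one_type_two_block
    (v ℓ : ℕ) (hℓ : 3 ≤ ℓ) (B : Finset (Finset ℕ)) (hSTS : IsSTS v B)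
    (hid : IsGoodSeq v ℓ B id) :
    (∀ b ∈ B, ℓ + 1 ∈ b → (b ∩ Finset.Icc 1 ℓ).card = 2 → 1 ∈ b) ∧
    (B.filter (fun b => ℓ + 1 ∈ b ∧ (b ∩ Finset.Icc 1 ℓ).card = 2)).card ≤ 1 :=
  point_succ_ell_in_at_most_one_type_two_block_general v ℓ B hSTS hid
end
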